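/- arXiv:2109.06494 — 13 statements merged into one kernel-verified Lean document; each statement's English description precedes it below -/
import Mathlib

section
/- Let d, χ, k, M, S_init be positive reals with χ > d, and set c = kM/S_init. Then there exist functions ρ, S : ℝ → ℝ such that ρ is positive, continuously differentiable and integrable with ∫_ℝ ρ(z) dz = M, S is positive, strictly increasing and differentiable, and for every z ∈ ℝ one has the zero-flux relation −c ρ(z) − d ρ'(z) + χ ρ(z) S'(z)/S(z) = 0 and the consumption relation c S'(z) = k ρ(z); moreover S(z) → 0 as z → −∞, S(z) → S_init as z → +∞, and ρ(z) → 0 as z → ±∞. -/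
open MeasureTheory Filter Set

lemma exp_integrableOn_Iic (b : ℝ) (hb : 0 < b) :
    IntegrableOn (fun z : ℝ => Real.exp (b * z)) (Set.Iic 0) := by
  have h1 : IntegrableOn (fun x : ℝ => Real.exp (-b * x)) (Set.Ioi (-1)) :=
    exp_neg_integrableOn_Ioi _ hb
  have h2 : IntegrableOn ((fun x : ℝ => Real.exp (-b * x)) ∘ Neg.neg)
      (Neg.neg ⁻¹' (Set.Ioi (-1))) :=
    (MeasurePreserving.integrableOn_comp_preimage
      (Measure.measurePreserving_neg (volume : Measure ℝ))
      (Homeomorph.neg ℝ).measurableEmbedding).2 h1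
  have h3 : IntegrableOn (fun z : ℝ => Real.exp (b * z)) (Set.Iio 1) := by
    have hset : (Neg.neg ⁻¹' (Set.Ioi (-1)) : Set ℝ) = Set.Iio 1 := by
      ext x; simp [Set.mem_Iio]
    have hfun : ((fun x : ℝ => Real.exp (-b * x)) ∘ Neg.neg) = fun z : ℝ => Real.exp (b * z) := by
      funext x; simp [Function.comp]
    rwa [hset, hfun] at h2
  exact h3.mono_set (fun x hx => lt_of_le_of_lt (Set.mem_Iic.mp hx) one_pos)

/-- Keller–Segel traveling wave (D = 0): existence of the wave profile. -/
theorem stmt_0 (d χ k M S_init : ℝ) (hd : 0 < d) (hχ : 0 < χ) (hk : 0 < k)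
    (hM : 0 < M) (hS_init : 0 < S_init) (hχd : d < χ)
    (c : ℝ) (hc : c = k * M / S_init) :
    ∃ ρ S : ℝ → ℝ,
      (∀ z, 0 < ρ z) ∧ ContDiff ℝ 1 ρ ∧ Integrable ρ ∧ (∫ z, ρ z) = M ∧
      (∀ z, 0 < S z) ∧ StrictMono S ∧ Differentiable ℝ S ∧
      (∀ z, -c * ρ z - d * deriv ρ z + χ * ρ z * (deriv S z / S z) = 0) ∧
      (∀ z, c * deriv S z = k * ρ z) ∧
      Tendsto S atBot (nhds 0) ∧ Tendsto S atTop (nhds S_init) ∧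
      Tendsto ρ atBot (nhds 0) ∧ Tendsto ρ atTop (nhds 0) := by
  have hc0 : 0 < c := by rw [hc]; positivity
  have hχd' : 0 < χ - d := by linarith
  set a : ℝ := c / d with ha_def
  have ha : 0 < a := div_pos hc0 hd
  set β : ℝ := d / (χ - d) with hβ_def
  have hβ : 0 < β := div_pos hd hχd'
  have hβχ : β * (χ - d) = d := div_mul_cancel₀ _ (ne_of_gt hχd')
  have hda : d * a = c := mul_div_cancel₀ _ (ne_of_gt hd)
  set E : ℝ → ℝ := fun z => Real.exp (-(a * z)) with hE_def
  have hEpos : ∀ z, 0 < E z := fun z => Real.exp_pos _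
  have hFpos : ∀ z, 0 < 1 + E z := fun z => by have := hEpos z; linarith
  have hFne : ∀ z, (1 : ℝ) + E z ≠ 0 := fun z => (hFpos z).ne'
  set S : ℝ → ℝ := fun z => S_init * Real.exp (-β * Real.log (1 + E z)) with hS_def
  set σ : ℝ → ℝ := fun z => E z / (1 + E z) with hσ_def
  set ρ : ℝ → ℝ := fun z => c * β * a / k * (S z * σ z) with hρ_def
  have hSpos : ∀ z, 0 < S z := fun z => mul_pos hS_init (Real.exp_pos _)
  have hσpos : ∀ z, 0 < σ z := fun z => div_pos (hEpos z) (hFpos z)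
  have hρpos : ∀ z, 0 < ρ z := fun z => by
    have := hSpos z; have := hσpos z; positivity
  -- derivatives
  have hE' : ∀ z, HasDerivAt E (-a * E z) z := by
    intro z
    have h1 : HasDerivAt (fun z : ℝ => -(a * z)) (-a) z := by
      have := ((hasDerivAt_id z).const_mul a).neg; simp only [mul_one] at this; exact this
    have h2 : HasDerivAt E (Real.exp (-(a * z)) * -a) z :=
      h1.exp
    convert h2 using 1
    ring
  have hF' : ∀ z, HasDerivAt (fun z => 1 + E z) (-a * E z) z :=
    fun z => (hE' z).const_add 1
  have hL' : ∀ z, HasDerivAt (fun z => Real.log (1 + E z)) (-a * E z / (1 + E z)) z :=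
    fun z => (hF' z).log (hFne z)
  have hS' : ∀ z, HasDerivAt S (S z * (β * a * σ z)) z := by
    intro z
    have h1 : HasDerivAt (fun z => -β * Real.log (1 + E z)) (-β * (-a * E z / (1 + E z))) z :=
      (hL' z).const_mul (-β)
    have h2 := ((h1.exp).const_mul S_init)
    refine h2.congr_deriv ?_
    simp only [hS_def, hσ_def]
    field_simp
  have hσ' : ∀ z, HasDerivAt σ (-a * E z / (1 + E z) ^ 2) z := by
    intro z
    have h1 := (hE' z).div (hF' z) (hFne z)
    refine h1.congr_deriv ?_
    field_simp
    ring
  have hρ' : ∀ z, HasDerivAt ρ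
      (c * β * a / k * (S z * (β * a * σ z) * σ z + S z * (-a * E z / (1 + E z) ^ 2))) z :=
    fun z => ((hS' z).mul (hσ' z)).const_mul _
  have hderivS : ∀ z, deriv S z = S z * (β * a * σ z) := fun z => (hS' z).deriv
  have hderivρ : ∀ z, deriv ρ z
      = c * β * a / k * (S z * (β * a * σ z) * σ z + S z * (-a * E z / (1 + E z) ^ 2)) :=
    fun z => (hρ' z).deriv
  -- smoothness
  have hE_c : ContDiff ℝ 1 E :=
    Real.contDiff_exp.comp ((contDiff_const.mul contDiff_id).neg)
  have hF_c : ContDiff ℝ 1 (fun z => 1 + E z) := contDiff_const.add hE_c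
  have hL_c : ContDiff ℝ 1 (fun z => Real.log (1 + E z)) := hF_c.log hFne
  have hS_c : ContDiff ℝ 1 S :=
    contDiff_const.mul (Real.contDiff_exp.comp (contDiff_const.mul hL_c))
  have hσ_c : ContDiff ℝ 1 σ := hE_c.div hF_c hFne
  have hρ_c : ContDiff ℝ 1 ρ := contDiff_const.mul (hS_c.mul hσ_c)
  -- bounds
  have hS_le : ∀ z, S z ≤ S_init := by
    intro z
    have h1 : Real.exp (-β * Real.log (1 + E z)) ≤ 1 := by
      rw [Real.exp_le_one_iff]
      have : 0 ≤ Real.log (1 + E z) := Real.log_nonneg (by have := hEpos z; linarith)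
      nlinarith
    exact mul_le_of_le_one_right hS_init.le h1
  have hσ_le1 : ∀ z, σ z ≤ 1 := fun z =>
    (div_le_one (hFpos z)).2 (by linarith)
  have hσ_leE : ∀ z, σ z ≤ E z := fun z =>
    div_le_self (hEpos z).le (by have := hEpos z; linarith)
  have hS_le2 : ∀ z, S z ≤ S_init * Real.exp (a * β * z) := by
    intro z
    have h1 : -(a * z) ≤ Real.log (1 + E z) := by
      have := Real.log_le_log (hEpos z) (by linarith : E z ≤ 1 + E z)
      rwa [hE_def, Real.log_exp] at this
    have h2 : -β * Real.log (1 + E z) ≤ a * β * z := by nlinarith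
    exact mul_le_mul_of_nonneg_left (Real.exp_le_exp.2 h2) hS_init.le
  -- integrability
  have hρ_meas : AEStronglyMeasurable ρ (volume : Measure ℝ) :=
    (hρ_c.continuous).aestronglyMeasurable
  have hρ_int : Integrable ρ := by
    rw [← integrableOn_univ, ← Set.Iic_union_Ioi (a := (0:ℝ))]
    apply IntegrableOn.union
    · apply Integrable.mono' (g := fun z => (c * β * a / k * S_init) * Real.exp (a * β * z))
        (((exp_integrableOn_Iic (a * β) (by positivity)).const_mul _))
        (hρ_meas.restrict)
      refine ae_of_all _ fun z => ?_
      rw [Real.norm_of_nonneg (hρpos z).le]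
      have h1 : S z * σ z ≤ S_init * Real.exp (a * β * z) :=
        le_trans (mul_le_of_le_one_right (hSpos z).le (hσ_le1 z)) (hS_le2 z)
      have hK : 0 < c * β * a / k := by positivity
      calc ρ z = c * β * a / k * (S z * σ z) := rfl
        _ ≤ c * β * a / k * (S_init * Real.exp (a * β * z)) := by nlinarith
        _ = c * β * a / k * S_init * Real.exp (a * β * z) := by ring
    · apply Integrable.mono' (g := fun z => (c * β * a / k * S_init) * Real.exp (-a * z))
        (((exp_neg_integrableOn_Ioi 0 ha).const_mul _))
        (hρ_meas.restrict)
      refine ae_of_all _ fun z => ?_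
      rw [Real.norm_of_nonneg (hρpos z).le]
      have h1 : S z * σ z ≤ S_init * E z :=
        mul_le_mul (hS_le z) (hσ_leE z) (hσpos z).le hS_init.le
      have h2 : E z = Real.exp (-a * z) := by rw [hE_def]; ring_nf
      have hK : 0 < c * β * a / k := by positivity
      calc ρ z = c * β * a / k * (S z * σ z) := rfl
        _ ≤ c * β * a / k * (S_init * E z) := by nlinarith
        _ = c * β * a / k * S_init * Real.exp (-a * z) := by rw [h2]; ring
  -- limits
  have hE_top : Tendsto E atTop (nhds 0) := by
    apply Real.tendsto_exp_atBot.comp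
    have h1 : Tendsto (fun z : ℝ => a * z) atTop atTop := tendsto_id.const_mul_atTop ha
    exact tendsto_neg_atTop_atBot.comp h1
  have hF_top : Tendsto (fun z => 1 + E z) atTop (nhds 1) := by
    simpa using tendsto_const_nhds.add hE_top
  have hL_top : Tendsto (fun z => Real.log (1 + E z)) atTop (nhds 0) := by
    have := (Real.continuousAt_log (by norm_num : (1:ℝ) ≠ 0)).tendsto.comp hF_top
    simpa [Function.comp_def] using this
  have hS_top : Tendsto S atTop (nhds S_init) := by
    have h0 : Tendsto (fun z => -β * Real.log (1 + E z)) atTop (nhds 0) := by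
      simpa using hL_top.const_mul (-β)
    have h1 : Tendsto (fun z => Real.exp (-β * Real.log (1 + E z))) atTop (nhds 1) := by
      have := (Real.continuous_exp.tendsto 0).comp h0
      simpa [Function.comp_def] using this
    have h2 : Tendsto (fun z => S_init * Real.exp (-β * Real.log (1 + E z))) atTop
        (nhds (S_init * 1)) := tendsto_const_nhds.mul h1
    rw [mul_one] at h2
    exact h2
  have hσ_top : Tendsto σ atTop (nhds 0) := by
    have := hE_top.div hF_top one_ne_zero
    rw [zero_div] at this; exact this
  have hρ_top : Tendsto ρ atTop (nhds 0) := by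
    have := (hS_top.mul hσ_top).const_mul (c * β * a / k)
    simpa using this
  have hE_bot : Tendsto E atBot atTop := by
    apply Real.tendsto_exp_atTop.comp
    have h1 : Tendsto (fun z : ℝ => a * z) atBot atBot := tendsto_id.const_mul_atBot ha
    exact tendsto_neg_atBot_atTop.comp h1
  have hF_bot : Tendsto (fun z => 1 + E z) atBot atTop :=
    tendsto_atTop_add_const_left _ 1 hE_bot
  have hL_bot : Tendsto (fun z => Real.log (1 + E z)) atBot atTop :=
    Real.tendsto_log_atTop.comp hF_bot
  have hS_bot : Tendsto S atBot (nhds 0) := by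
    have h1 : Tendsto (fun z => -β * Real.log (1 + E z)) atBot atBot :=
      hL_bot.const_mul_atTop_of_neg (by linarith)
    have h2 : Tendsto (fun z => Real.exp (-β * Real.log (1 + E z))) atBot (nhds 0) :=
      Real.tendsto_exp_atBot.comp h1
    have h3 : Tendsto (fun z => S_init * Real.exp (-β * Real.log (1 + E z))) atBot
        (nhds (S_init * 0)) := h2.const_mul S_init
    rw [mul_zero] at h3
    exact h3
  have hσ_bot : Tendsto σ atBot (nhds 1) := by
    have h1 : Tendsto (fun z => (1 + E z)⁻¹) atBot (nhds 0) :=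
      tendsto_inv_atTop_zero.comp hF_bot
    have h2 : Tendsto (fun z => 1 - (1 + E z)⁻¹) atBot (nhds 1) := by
      simpa using tendsto_const_nhds.sub h1
    refine h2.congr fun z => ?_
    rw [hσ_def]
    field_simp [hFne z]
    ring
  have hρ_bot : Tendsto ρ atBot (nhds 0) := by
    have := (hS_bot.mul hσ_bot).const_mul (c * β * a / k)
    simpa using this
  -- the integral
  have hρ_integral : (∫ z, ρ z) = M := by
    have hf : ∀ z, HasDerivAt (fun z => c / k * S z) (ρ z) z := by
      intro z
      have := (hS' z).const_mul (c / k)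
      refine this.congr_deriv ?_
      rw [hρ_def]
      field_simp
    have hbot : Tendsto (fun z => c / k * S z) atBot (nhds 0) := by
      have h := hS_bot.const_mul (c / k)
      rw [mul_zero] at h
      exact h
    have htop : Tendsto (fun z => c / k * S z) atTop (nhds (c / k * S_init)) :=
      hS_top.const_mul (c / k)
    have := integral_of_hasDerivAt_of_tendsto hf hρ_int hbot htop
    rw [this, hc]
    field_simp
    ring
  refine ⟨ρ, S, hρpos, hρ_c, hρ_int, hρ_integral, hSpos, ?_, fun z => (hS' z).differentiableAt,
    ?_, ?_, hS_bot, hS_top, hρ_bot, hρ_top⟩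
  · apply strictMono_of_deriv_pos
    intro z
    rw [hderivS z]
    have h1 := hSpos z
    have h2 := hσpos z
    positivity
  · intro z
    have key : ∀ e s : ℝ, 0 < e → 0 < s →
        -c * (c * β * a / k * (s * (e / (1 + e))))
          - d * (c * β * a / k * (s * (β * a * (e / (1 + e))) * (e / (1 + e))
              + s * (-a * e / (1 + e) ^ 2)))
          + χ * (c * β * a / k * (s * (e / (1 + e)))) * (β * a * (e / (1 + e))) = 0 := by
      intro e s he hs
      have h1 : (1 : ℝ) + e ≠ 0 := by linarith
      have hk' : k ≠ 0 := hk.ne'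
      linear_combination (norm := skip) (c * β * a / k * s * (e / (1 + e))) * hda
        + (c * β * a / k * s * a * (e / (1 + e)) ^ 2) * hβχ
      field_simp
      ring
    have hSne : S z ≠ 0 := (hSpos z).ne'
    rw [hderivρ z, hderivS z, mul_div_cancel_left₀ _ hSne]
    simp only [hρ_def, hσ_def]
    exact key (E z) (S z) (hEpos z) (hSpos z)
  · intro z
    rw [hderivS z]
    simp only [hρ_def, hσ_def]
    field_simp
end

section
/- Let d, χ, c, k, S_init be positive reals with χ > d, and define S : ℝ → ℝ by S(z) = S_init (1 + exp(−(c/d) z))^{d/(d−χ)} and a = c² S_init^{1−χ/d} / (k d (χ/d − 1)). Then S is positive and strictly increasing, S(z) → 0 as z → −∞, S(z) → S_init as z → +∞, a > 0, and for every z ∈ ℝ, c S'(z) = k a exp(−(c/d) z) · S(z)^{χ/d}. -/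
open MeasureTheory Filter

/-- Explicit signal profile of the Keller–Segel traveling wave (D = 0). -/
theorem stmt_1 (d χ c k S_init : ℝ) (hd : 0 < d) (hχ : 0 < χ) (hc : 0 < c)
    (hk : 0 < k) (hS_init : 0 < S_init) (hχd : d < χ)
    (S : ℝ → ℝ)
    (hS : ∀ z, S z = S_init * (1 + Real.exp (-(c / d) * z)) ^ (d / (d - χ)))
    (a : ℝ) (ha : a = c ^ 2 * S_init ^ (1 - χ / d) / (k * d * (χ / d - 1))) :
    (∀ z, 0 < S z) ∧ StrictMono S ∧
    Tendsto S atBot (nhds 0) ∧ Tendsto S atTop (nhds S_init) ∧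
    0 < a ∧
    (∀ z, c * deriv S z = k * a * Real.exp (-(c / d) * z) * S z ^ (χ / d)) := by
  have hd' : d ≠ 0 := hd.ne'
  have hdχ : d - χ < 0 := by linarith
  have hdχ' : d - χ ≠ 0 := hdχ.ne
  set p : ℝ := d / (d - χ) with hp
  have hpneg : p < 0 := div_neg_of_pos_of_neg hd hdχ
  have hcd : 0 < c / d := div_pos hc hd
  have hB : ∀ z : ℝ, 0 < 1 + Real.exp (-(c / d) * z) := fun z => by positivity
  have hSpos : ∀ z, 0 < S z := fun z => by
    rw [hS]; exact mul_pos hS_init (Real.rpow_pos_of_pos (hB z) _)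
  have hχd1 : 0 < χ / d - 1 := by
    have : 1 < χ / d := (one_lt_div hd).mpr hχd
    linarith
  have hapos : 0 < a := by
    rw [ha]
    apply div_pos
    · exact mul_pos (pow_pos hc 2) (Real.rpow_pos_of_pos hS_init _)
    · exact mul_pos (mul_pos hk hd) hχd1
  refine ⟨hSpos, ?_, ?_, ?_, hapos, ?_⟩
  · -- strict monotone
    intro x y hxy
    rw [hS, hS]
    apply mul_lt_mul_of_pos_left _ hS_init
    apply Real.rpow_lt_rpow_of_neg (hB y) _ hpneg
    have : -(c / d) * y < -(c / d) * x := by nlinarith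
    have := Real.exp_lt_exp.mpr this
    linarith
  · -- tendsto atBot 0
    have h1 : Tendsto (fun z : ℝ => -(c / d) * z) atBot atTop := by
      have := (tendsto_neg_atBot_atTop (G := ℝ)).const_mul_atTop hcd
      convert this using 2 with z
      ring
    have h2 : Tendsto (fun z : ℝ => 1 + Real.exp (-(c / d) * z)) atBot atTop :=
      tendsto_atTop_add_const_left _ 1 (Real.tendsto_exp_atTop.comp h1)
    have h3 : Tendsto (fun x : ℝ => x ^ p) atTop (nhds 0) := by
      have := tendsto_rpow_neg_atTop (neg_pos.mpr hpneg)
      simpa using this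
    have h4 := (h3.comp h2).const_mul S_init
    rw [mul_zero] at h4
    convert h4 using 2 with z
    exact hS z
  · -- tendsto atTop S_init
    have h1 : Tendsto (fun z : ℝ => -(c / d) * z) atTop atBot := by
      have := (tendsto_neg_atTop_atBot (G := ℝ)).const_mul_atBot hcd
      convert this using 2 with z
      ring
    have h2 : Tendsto (fun z : ℝ => 1 + Real.exp (-(c / d) * z)) atTop (nhds 1) := by
      have := Real.tendsto_exp_atBot.comp h1
      have h := this.const_add (1 : ℝ)
      simpa using h
    have h3 := (h2.rpow_const (p := p) (Or.inl one_ne_zero)).const_mul S_init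
    rw [Real.one_rpow, mul_one] at h3
    convert h3 using 2 with z
    exact hS z
  · -- ODE
    intro z
    set E : ℝ := Real.exp (-(c / d) * z) with hE
    have hEpos : 0 < E := Real.exp_pos _
    have hBz : (0:ℝ) < 1 + E := hB z
    have hderivz : HasDerivAt S (S_init * (E * -(c / d) * p * (1 + E) ^ (p - 1))) z := by
      have h1 : HasDerivAt (fun z : ℝ => -(c / d) * z) (-(c / d)) z := by
        simpa using (hasDerivAt_id z).const_mul (-(c / d))
      have h2 := h1.exp
      have h3 := h2.const_add (1 : ℝ)
      have h4 := h3.rpow_const (p := p) (Or.inl hBz.ne')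
      have h5 := h4.const_mul S_init
      have hfun : S = fun z => S_init * (1 + Real.exp (-(c / d) * z)) ^ p := funext hS
      rw [hfun]
      exact h5
    rw [hderivz.deriv, hS z]
    have hmul : (S_init * (1 + E) ^ p) ^ (χ / d)
        = S_init ^ (χ / d) * (1 + E) ^ (p * (χ / d)) := by
      rw [Real.mul_rpow hS_init.le (Real.rpow_pos_of_pos hBz p).le,
        ← Real.rpow_mul hBz.le]
    rw [hmul]
    have hexp : p * (χ / d) = p - 1 := by
      rw [hp]; field_simp; ring
    rw [hexp, ha]
    have hSsplit : S_init ^ (1 - χ / d) * S_init ^ (χ / d) = S_init := by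
      rw [← Real.rpow_add hS_init]
      norm_num
    have hk' : k ≠ 0 := hk.ne'
    have hχd1' : χ / d - 1 ≠ 0 := hχd1.ne'
    set X : ℝ := (1 + E) ^ (p - 1)
    set T : ℝ := S_init ^ (χ / d) with hT
    have hT0 : T ≠ 0 := (Real.rpow_pos_of_pos hS_init _).ne'
    have hSval : S_init ^ (1 - χ / d) = S_init / T := by
      rw [eq_div_iff hT0]
      exact hSsplit
    have hχd2 : χ - d ≠ 0 := by linarith
    rw [hSval, hp]
    have hred : χ / d - 1 = (χ - d) / d := by field_simp
    rw [hred]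
    field_simp
    ring
end

section
/- Let d, χ, c, a' be positive reals with χ > d, and define ρ : ℝ → ℝ by ρ(z) = a' exp(−(c/d) z) (1 + exp(−(c/d) z))^{χ/(d−χ)}, and S : ℝ → ℝ by S(z) = S_init (1 + exp(−(c/d) z))^{d/(d−χ)} for some S_init > 0. Then ρ is positive, integrable over ℝ, ρ(z) → 0 as z → ±∞, and for every z ∈ ℝ the zero-flux relation −c ρ(z) − d ρ'(z) + χ ρ(z) S'(z)/S(z) = 0 holds. -/
/-!
With `α = c / d`, `β = χ / (d - χ)` and `w = 1 + exp (-α z)` we have `ρ = a' exp (-α z) w ^ β`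
and `S = S_init w ^ (1 + β)`, where `β ≤ 0` and `1 + β = d / (d - χ) < 0`. Using `1 ≤ w` and
`exp (-α z) ≤ w`, `ρ` is bounded both by `a' exp (-α z)` and by `a' exp (-α (1 + β) z)`, which
decay at `+∞` and `-∞` respectively; this gives integrability and both limits. For the flux,
`ρ' / ρ = -α + β w' / w` and `S' / S = (1 + β) w' / w`, so the flux is
`ρ (-c + d α + (χ (1 + β) - d β) w' / w)` and both coefficients vanish.
-/

open MeasureTheory Filter Real Topology Asymptotics

section ExponentialDecay

variable {f : ℝ → ℝ} {C a b : ℝ}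

theorem tendsto_atBot_zero_of_le_exp_mul (ha : 0 < a) (hf : ∀ z, 0 ≤ f z)
    (h : ∀ z, f z ≤ C * exp (a * z)) : Tendsto f atBot (𝓝 0) := by
  have hexp : Tendsto (fun z => C * exp (a * z)) atBot (𝓝 0) := by
    simpa using (tendsto_exp_atBot.comp (tendsto_id.const_mul_atBot ha)).const_mul C
  exact squeeze_zero hf h hexp

theorem tendsto_atTop_zero_of_le_exp_mul (hb : b < 0) (hf : ∀ z, 0 ≤ f z)
    (h : ∀ z, f z ≤ C * exp (b * z)) : Tendsto f atTop (𝓝 0) := by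
  have hexp : Tendsto (fun z => C * exp (b * z)) atTop (𝓝 0) := by
    simpa using (tendsto_exp_atBot.comp (tendsto_id.const_mul_atTop_of_neg hb)).const_mul C
  exact squeeze_zero hf h hexp

theorem isBigO_exp_mul_of_le {l : Filter ℝ} (hf : ∀ z, 0 ≤ f z)
    (h : ∀ z, f z ≤ C * exp (a * z)) : f =O[l] fun z => exp (a * z) :=
  IsBigO.of_bound C <| Eventually.of_forall fun z => by
    simpa [abs_of_nonneg (hf z), (exp_pos _).le] using h z

theorem integrable_of_le_exp_mul (hf_cont : Continuous f) (ha : 0 < a) (hb : b < 0)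
    (hf : ∀ z, 0 ≤ f z) (hbot : ∀ z, f z ≤ C * exp (a * z))
    (htop : ∀ z, f z ≤ C * exp (b * z)) : Integrable f :=
  hf_cont.locallyIntegrable.integrable_of_isBigO_atBot_atTop
    (isBigO_exp_mul_of_le hf hbot) ⟨Set.Iic 0, Iic_mem_atBot 0, integrableOn_exp_mul_Iic ha 0⟩
    (isBigO_exp_mul_of_le hf htop) ⟨Set.Ioi 0, Ioi_mem_atTop 0, integrableOn_exp_mul_Ioi hb 0⟩

end ExponentialDecay

section LogisticProfile

variable (α p : ℝ) {A : ℝ}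

theorem hasDerivAt_one_add_exp_neg_mul_rpow (z : ℝ) :
    HasDerivAt (fun z => (1 + exp (-α * z)) ^ p)
      ((1 + exp (-α * z)) ^ p * (p * (-α * exp (-α * z) / (1 + exp (-α * z))))) z := by
  have hw : HasDerivAt (fun z => 1 + exp (-α * z)) (-α * exp (-α * z)) z := by
    simpa [mul_comm] using (((hasDerivAt_id z).const_mul (-α)).exp).const_add 1
  convert hw.rpow_const (p := p) (Or.inl (by positivity)) using 1
  rw [rpow_sub_one (by positivity)]
  ring

theorem hasDerivAt_mul_exp_neg_mul_mul_rpow (A z : ℝ) :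
    HasDerivAt (fun z => A * exp (-α * z) * (1 + exp (-α * z)) ^ p)
      (A * exp (-α * z) * (1 + exp (-α * z)) ^ p *
        (-α + p * (-α * exp (-α * z) / (1 + exp (-α * z))))) z := by
  have hu : HasDerivAt (fun z => exp (-α * z)) (-α * exp (-α * z)) z := by
    simpa [mul_comm] using ((hasDerivAt_id z).const_mul (-α)).exp
  exact ((hu.const_mul A).mul (hasDerivAt_one_add_exp_neg_mul_rpow α p z)).congr_deriv (by ring)

theorem mul_exp_neg_mul_mul_rpow_le (hA : 0 ≤ A) (hp : p ≤ 0) (z : ℝ) :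
    A * exp (-α * z) * (1 + exp (-α * z)) ^ p ≤ A * exp (-α * z) := by
  have : (1 + exp (-α * z)) ^ p ≤ 1 :=
    rpow_le_one_of_one_le_of_nonpos (by linarith [exp_pos (-α * z)]) hp
  simpa using mul_le_mul_of_nonneg_left this (by positivity : 0 ≤ A * exp (-α * z))

theorem mul_exp_neg_mul_mul_rpow_le_exp (hA : 0 ≤ A) (hp : p ≤ 0) (z : ℝ) :
    A * exp (-α * z) * (1 + exp (-α * z)) ^ p ≤ A * exp (-(α * (1 + p)) * z) := by
  have : (1 + exp (-α * z)) ^ p ≤ exp (-α * z) ^ p :=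
    rpow_le_rpow_of_nonpos (exp_pos _) (by linarith [exp_pos (-α * z)]) hp
  calc A * exp (-α * z) * (1 + exp (-α * z)) ^ p ≤ A * exp (-α * z) * exp (-α * z) ^ p :=
        mul_le_mul_of_nonneg_left this (by positivity)
    _ = A * exp (-(α * (1 + p)) * z) := by
        rw [← exp_mul, mul_assoc, ← exp_add]
        ring_nf

theorem chemotactic_flux_eq_zero {S₀ c d χ β q : ℝ} {ρ S : ℝ → ℝ}
    (hρ : ∀ z, ρ z = A * exp (-α * z) * (1 + exp (-α * z)) ^ β)
    (hS : ∀ z, S z = S₀ * (1 + exp (-α * z)) ^ q) (hS₀ : S₀ ≠ 0)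
    (hc : d * α = c) (hχ : d * β = χ * q) (z : ℝ) :
    -c * ρ z - d * deriv ρ z + χ * ρ z * (deriv S z / S z) = 0 := by
  obtain rfl : ρ = _ := funext hρ
  obtain rfl : S = _ := funext hS
  rw [(hasDerivAt_mul_exp_neg_mul_mul_rpow α β A z).deriv,
    ((hasDerivAt_one_add_exp_neg_mul_rpow α q z).const_mul S₀).deriv]
  set x := -α * exp (-α * z) / (1 + exp (-α * z))
  set R := A * exp (-α * z) * (1 + exp (-α * z)) ^ β
  have hW : (1 + exp (-α * z)) ^ q ≠ 0 := by positivity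
  rw [mul_div_mul_left _ _ hS₀, mul_div_cancel_left₀ _ hW]
  linear_combination R * hc - R * x * hχ

end LogisticProfile

/-- Explicit density profile of the Keller–Segel traveling wave (D = 0). -/
theorem stmt_2 (d χ c a' S_init : ℝ) (hd : 0 < d) (hχ : 0 < χ) (hc : 0 < c)
    (ha' : 0 < a') (hS_init : 0 < S_init) (hχd : d < χ)
    (ρ S : ℝ → ℝ)
    (hρ : ∀ z, ρ z = a' * Real.exp (-(c / d) * z) *
        (1 + Real.exp (-(c / d) * z)) ^ (χ / (d - χ)))
    (hS : ∀ z, S z = S_init * (1 + Real.exp (-(c / d) * z)) ^ (d / (d - χ))) :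
    (∀ z, 0 < ρ z) ∧ Integrable ρ ∧
    Tendsto ρ atBot (nhds 0) ∧ Tendsto ρ atTop (nhds 0) ∧
    (∀ z, -c * ρ z - d * deriv ρ z + χ * ρ z * (deriv S z / S z) = 0) := by
  have hdχ : d - χ < 0 := by linarith
  have hα : 0 < c / d := div_pos hc hd
  have hβ : χ / (d - χ) ≤ 0 := div_nonpos_of_nonneg_of_nonpos hχ.le hdχ.le
  have hdecay : 0 < -(c / d * (1 + χ / (d - χ))) := by
    have h1β : 1 + χ / (d - χ) = d / (d - χ) := by field_simp [hdχ.ne]; ring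
    rw [h1β, ← mul_neg]
    exact mul_pos hα (neg_pos.2 (div_neg_of_pos_of_neg hd hdχ))
  have hpos : ∀ z, 0 < ρ z := fun z => (hρ z).symm ▸ by positivity
  have hbot : ∀ z, ρ z ≤ a' * exp (-(c / d * (1 + χ / (d - χ))) * z) := fun z =>
    (hρ z).trans_le (mul_exp_neg_mul_mul_rpow_le_exp _ _ ha'.le hβ z)
  have htop : ∀ z, ρ z ≤ a' * exp (-(c / d) * z) := fun z =>
    (hρ z).trans_le (mul_exp_neg_mul_mul_rpow_le _ _ ha'.le hβ z)
  have hcont : Continuous ρ := by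
    rw [funext hρ]
    exact continuous_iff_continuousAt.2 fun z =>
      (hasDerivAt_mul_exp_neg_mul_mul_rpow _ _ a' z).continuousAt
  have hnonneg : ∀ z, 0 ≤ ρ z := fun z => (hpos z).le
  refine ⟨hpos, integrable_of_le_exp_mul hcont hdecay (neg_lt_zero.2 hα) hnonneg hbot htop,
    tendsto_atBot_zero_of_le_exp_mul hdecay hnonneg hbot,
    tendsto_atTop_zero_of_le_exp_mul (neg_lt_zero.2 hα) hnonneg htop,
    chemotactic_flux_eq_zero _ hρ hS hS_init.ne' (mul_div_cancel₀ c hd.ne') (by ring)⟩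
end

section
/- Let c, k, S_init, M > 0 and D ≥ 0. Let S : ℝ → ℝ be twice differentiable and ρ : ℝ → ℝ be integrable with ∫_ℝ ρ(z) dz = M, satisfying −c S'(z) = D S''(z) − k ρ(z) for all z ∈ ℝ. If S(z) → 0 as z → −∞, S(z) → S_init as z → +∞, and S'(z) → 0 as z → ±∞, then c S_init = k M. -/
/-!
In the moving frame the signal equation says that the flux `D S' + c S` is an antiderivative
of `k ρ`. Integrating over the whole line, the flux goes from `0` at `-∞` to `c S_init` at `+∞`,
while the integral of `k ρ` is `k M`.
-/

open MeasureTheory Filter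

lemma hasDerivAt_flux {c k D : ℝ} {S ρ : ℝ → ℝ}
    (hS1 : Differentiable ℝ S) (hS2 : Differentiable ℝ (deriv S))
    (heq : ∀ z, -c * deriv S z = D * deriv (deriv S) z - k * ρ z) (z : ℝ) :
    HasDerivAt (fun z => D * deriv S z + c * S z) (k * ρ z) z := by
  have hflux := ((hS2 z).hasDerivAt.const_mul D).add ((hS1 z).hasDerivAt.const_mul c)
  rwa [show D * deriv (deriv S) z + c * deriv S z = k * ρ z by linarith [heq z]] at hflux

lemma tendsto_flux {c D a b : ℝ} {S : ℝ → ℝ} {l : Filter ℝ}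
    (hS : Tendsto S l (nhds a)) (hS' : Tendsto (deriv S) l (nhds b)) :
    Tendsto (fun z => D * deriv S z + c * S z) l (nhds (D * b + c * a)) :=
  (hS'.const_mul D).add (hS.const_mul c)

theorem stmt_4_general (c k S_init M D : ℝ) (S ρ : ℝ → ℝ)
    (hS1 : Differentiable ℝ S) (hS2 : Differentiable ℝ (deriv S))
    (hρint : Integrable ρ) (hρM : (∫ z, ρ z) = M)
    (heq : ∀ z, -c * deriv S z = D * deriv (deriv S) z - k * ρ z)
    (hSbot : Tendsto S atBot (nhds 0)) (hStop : Tendsto S atTop (nhds S_init))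
    (hS'bot : Tendsto (deriv S) atBot (nhds 0))
    (hS'top : Tendsto (deriv S) atTop (nhds 0)) :
    c * S_init = k * M := by
  have hintegral := integral_of_hasDerivAt_of_tendsto (hasDerivAt_flux hS1 hS2 heq)
    (hρint.const_mul k) (tendsto_flux hSbot hS'bot) (tendsto_flux hStop hS'top)
  rw [integral_const_mul, hρM] at hintegral
  linarith

/-- The wave-speed formula c S_init = k M, obtained by integrating the signal equation. -/
theorem stmt_4 (c k S_init M D : ℝ) (hc : 0 < c) (hk : 0 < k) (hS_init : 0 < S_init)
    (hM : 0 < M) (hD : 0 ≤ D) (S ρ : ℝ → ℝ)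
    (hS1 : Differentiable ℝ S) (hS2 : Differentiable ℝ (deriv S))
    (hρint : Integrable ρ) (hρM : (∫ z, ρ z) = M)
    (heq : ∀ z, -c * deriv S z = D * deriv (deriv S) z - k * ρ z)
    (hSbot : Tendsto S atBot (nhds 0)) (hStop : Tendsto S atTop (nhds S_init))
    (hS'bot : Tendsto (deriv S) atBot (nhds 0))
    (hS'top : Tendsto (deriv S) atTop (nhds 0)) :
    c * S_init = k * M :=
  stmt_4_general c k S_init M D S ρ hS1 hS2 hρint hρM heq hSbot hStop hS'bot hS'top
end

section
/- Let c, d, k, a, S_init > 0 and 0 < χ < d. Then there is no differentiable positive function S : ℝ → ℝ satisfying c S'(z) = k a exp(−(c/d) z) · S(z)^{χ/d} for all z ∈ ℝ together with lim_{z→+∞} S(z) = S_init. -/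
open MeasureTheory Filter

/-- Necessity of χ > d: no positive signal profile exists when χ < d. -/
theorem stmt_5 (c d k a S_init χ : ℝ) (hc : 0 < c) (hd : 0 < d) (hk : 0 < k)
    (ha : 0 < a) (hS_init : 0 < S_init) (hχ0 : 0 < χ) (hχd : χ < d) :
    ¬ ∃ S : ℝ → ℝ, Differentiable ℝ S ∧ (∀ z, 0 < S z) ∧
      (∀ z, c * deriv S z = k * a * Real.exp (-(c / d) * z) * S z ^ (χ / d)) ∧
      Tendsto S atTop (nhds S_init) := by
  rintro ⟨S, hS, hpos, hode, hlim⟩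
  set β : ℝ := 1 - χ / d with hβ
  have hβpos : 0 < β := by
    have : χ / d < 1 := (div_lt_one hd).mpr hχd
    simp [hβ]; linarith
  set A : ℝ := β * k * a * d / c ^ 2 with hA
  have hApos : 0 < A := by positivity
  set g : ℝ → ℝ := fun z => S z ^ β + A * Real.exp (-(c / d) * z) with hg
  -- derivative of g is zero
  have hgderiv : ∀ z, HasDerivAt g 0 z := by
    intro z
    have hSz : HasDerivAt S (deriv S z) z := (hS z).hasDerivAt
    have h1 : HasDerivAt (fun z => S z ^ β) (deriv S z * β * S z ^ (β - 1)) z :=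
      hSz.rpow_const (Or.inl (hpos z).ne')
    have h2 : HasDerivAt (fun z => Real.exp (-(c / d) * z))
        (Real.exp (-(c / d) * z) * (-(c / d) * 1)) z :=
      ((hasDerivAt_id z).const_mul (-(c / d))).exp
    have h3 := h1.add (h2.const_mul A)
    have hdS : deriv S z = k * a * Real.exp (-(c / d) * z) * S z ^ (χ / d) / c := by
      rw [eq_div_iff hc.ne']
      linarith [hode z]
    have hval : deriv S z * β * S z ^ (β - 1) + A * (Real.exp (-(c / d) * z) * (-(c / d) * 1))
        = 0 := by
      rw [hdS]
      have hrw : S z ^ (χ / d) * S z ^ (β - 1) = 1 := by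
        rw [← Real.rpow_add (hpos z)]
        have : χ / d + (β - 1) = 0 := by simp [hβ]
        rw [this, Real.rpow_zero]
      set E := Real.exp (-(c / d) * z) with hE
      set X := S z ^ (χ / d) with hX
      set Y := S z ^ (β - 1) with hY
      have hre : k * a * E * X / c * β * Y = k * a * E * β / c * (X * Y) := by ring
      rw [hre, hrw, hA]
      field_simp
      ring
    rw [hval] at h3
    exact h3
  have hgdiff : Differentiable ℝ g := fun z => (hgderiv z).differentiableAt
  have hgd0 : ∀ z, deriv g z = 0 := fun z => (hgderiv z).deriv
  have hconst : ∀ z, g z = g 0 := fun z => is_const_of_deriv_eq_zero hgdiff hgd0 z 0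
  -- limit of g at +∞ is S_init ^ β
  have hcd : 0 < c / d := div_pos hc hd
  have hlin : Tendsto (fun z : ℝ => -(c / d) * z) atTop atBot := by
    have h : Tendsto (fun z : ℝ => (c / d) * z) atTop atTop :=
      (tendsto_id (α := ℝ)).const_mul_atTop hcd
    have h2 := tendsto_neg_atTop_atBot.comp h
    refine h2.congr fun z => by simp [Function.comp]
  have hexp0 : Tendsto (fun z : ℝ => Real.exp (-(c / d) * z)) atTop (nhds 0) :=
    Real.tendsto_exp_atBot.comp hlin
  have hrpow : Tendsto (fun z => S z ^ β) atTop (nhds (S_init ^ β)) :=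
    ((Real.continuousAt_rpow_const S_init β (Or.inl hS_init.ne')).tendsto).comp hlim
  have hglim : Tendsto g atTop (nhds (S_init ^ β + A * 0)) :=
    hrpow.add (hexp0.const_mul A)
  have hg0 : g 0 = S_init ^ β := by
    have h1 : Tendsto g atTop (nhds (g 0)) := by
      refine Tendsto.congr (fun z => (hconst z).symm) tendsto_const_nhds
    have := tendsto_nhds_unique h1 hglim
    simpa using this
  -- at -∞ the exponential term dominates
  have hlin2 : Tendsto (fun z : ℝ => -(c / d) * z) atBot atTop := by
    have h : Tendsto (fun z : ℝ => -z) atBot atTop := tendsto_neg_atBot_atTop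
    have h2 := h.const_mul_atTop hcd
    refine h2.congr fun z => by ring
  have hexpinf : Tendsto (fun z : ℝ => A * Real.exp (-(c / d) * z)) atBot atTop :=
    (Real.tendsto_exp_atTop.comp hlin2).const_mul_atTop hApos
  obtain ⟨z, hz⟩ := (hexpinf.eventually_ge_atTop (S_init ^ β + 1)).exists
  have hgz : g z = S_init ^ β := by rw [hconst z, hg0]
  have hSzpos : 0 < S z ^ β := Real.rpow_pos_of_pos (hpos z) β
  have : S z ^ β = S_init ^ β - A * Real.exp (-(c / d) * z) := by
    have := hgz
    simp only [hg] at this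
    linarith
  linarith
end

section
/- Let c, d, k, χ > 0. Then there is no continuously differentiable positive function ρ : ℝ → ℝ satisfying d · ρ'(z)/ρ(z) = −c + (χ k / c) ρ(z) for all z ∈ ℝ together with lim_{z→−∞} ρ(z) = 0. -/
open MeasureTheory Filter

/-- Nonexistence of traveling waves for the consumption rate kSρ (D = 0). -/
theorem stmt_6 (c d k χ : ℝ) (hc : 0 < c) (hd : 0 < d) (hk : 0 < k) (hχ : 0 < χ) :
    ¬ ∃ ρ : ℝ → ℝ, ContDiff ℝ 1 ρ ∧ (∀ z, 0 < ρ z) ∧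
      (∀ z, d * (deriv ρ z / ρ z) = -c + (χ * k / c) * ρ z) ∧
      Tendsto ρ atBot (nhds 0) := by
  rintro ⟨ρ, hsm, hpos, hode, hlim⟩
  set a : ℝ := χ * k / c with ha
  have ha0 : 0 < a := div_pos (mul_pos hχ hk) hc
  have hsmall : ∀ᶠ z in atBot, ρ z < c / (2 * a) := by
    have : Set.Iio (c / (2 * a)) ∈ nhds (0 : ℝ) :=
      Iio_mem_nhds (div_pos hc (by positivity))
    exact hlim this
  obtain ⟨z0, hz0⟩ := eventually_atBot.mp hsmall
  have hderiv_neg : ∀ z ≤ z0, deriv ρ z ≤ 0 := by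
    intro z hz
    have h1 : ρ z < c / (2 * a) := hz0 z hz
    have h2 : -c + a * ρ z < -c / 2 := by
      have := (mul_lt_mul_iff_right₀ ha0).mpr h1
      rw [mul_div_assoc'] at this
      have : a * ρ z < c / 2 := by
        calc a * ρ z < a * (c / (2 * a)) := (mul_lt_mul_iff_right₀ ha0).mpr h1
          _ = c / 2 := by field_simp
      linarith
    have h3 : d * (deriv ρ z / ρ z) < 0 := by
      rw [hode z]; linarith
    have h4 : deriv ρ z / ρ z < 0 := by
      by_contra h
      push_neg at h
      nlinarith
    have := div_neg_iff.mp h4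
    rcases this with ⟨_, h⟩ | ⟨h, _⟩
    · exact absurd h (not_lt.mpr (hpos z).le)
    · exact h.le
  have hanti : AntitoneOn ρ (Set.Iic z0) := by
    apply antitoneOn_of_deriv_nonpos (convex_Iic z0)
      (hsm.continuous.continuousOn)
      (fun z _ => ((hsm.differentiable one_ne_zero) z).differentiableWithinAt)
    intro z hz
    rw [interior_Iic] at hz
    exact hderiv_neg z hz.le
  have hge : ∀ z ≤ z0, ρ z0 ≤ ρ z := fun z hz =>
    hanti (Set.mem_Iic.mpr hz) (Set.mem_Iic.mpr le_rfl) hz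
  have hless : ∀ᶠ z in atBot, ρ z < ρ z0 :=
    hlim (Iio_mem_nhds (hpos z0))
  obtain ⟨z1, hz1⟩ := eventually_atBot.mp hless
  have hz' : min z0 z1 ≤ z0 := min_le_left _ _
  have := hge _ hz'
  have := hz1 _ (min_le_right z0 z1)
  linarith
end

section
/- Let χ_S, χ_A, α, D_A > 0. Then there exists a unique c > 0 such that χ_S − c = χ_A c / √(c² + 4 α D_A); moreover this c satisfies 0 < c < χ_S. -/
/-! Both sides of `χS - c = χA c / √(c² + 4αDA)` are continuous in `c`; the left side is strictly
decreasing and the right side nondecreasing on `[0, ∞)`, so their difference has at most one zero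
there. At `c = 0` the difference is `χS > 0`, at `c = χS` it is negative, so the intermediate value
theorem gives a zero in `(0, χS)`. A positive solution always lies below `χS` because the right
side is positive. -/

open Set

lemma monotoneOn_div_sqrt_sq_add {K : ℝ} (hK : 0 < K) :
    MonotoneOn (fun c : ℝ => c / √(c ^ 2 + K)) (Ici 0) := by
  intro a ha b hb hab
  have ha : 0 ≤ a := ha
  have hb : 0 ≤ b := hb
  have hmul_sqrt : ∀ x y : ℝ, 0 ≤ x → x * √y = √(x ^ 2 * y) := fun x y hx => by
    rw [Real.sqrt_mul (sq_nonneg x), Real.sqrt_sq hx]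
  rw [div_le_div_iff₀ (by positivity) (by positivity), hmul_sqrt a _ ha, hmul_sqrt b _ hb]
  apply Real.sqrt_le_sqrt
  nlinarith [pow_le_pow_left₀ ha hab 2]

lemma continuous_div_sqrt_sq_add {K : ℝ} (hK : 0 < K) :
    Continuous (fun c : ℝ => c / √(c ^ 2 + K)) :=
  continuous_id.div (by fun_prop) fun c => (Real.sqrt_pos.2 (by positivity)).ne'

lemma existsUnique_pos_eq_zero_of_strictAntiOn {f : ℝ → ℝ} {b : ℝ} (hb : 0 ≤ b)
    (hcont : ContinuousOn f (Icc 0 b)) (hanti : StrictAntiOn f (Ici 0))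
    (hf0 : 0 < f 0) (hfb : f b < 0) :
    ∃! c : ℝ, 0 < c ∧ f c = 0 := by
  obtain ⟨c, hc, hfc⟩ := intermediate_value_Ioo' hb hcont ⟨hfb, hf0⟩
  refine ⟨c, ⟨hc.1, hfc⟩, fun c' ⟨hc', hfc'⟩ => ?_⟩
  exact hanti.injOn (mem_Ici.2 hc'.le) (mem_Ici.2 hc.1.le) (hfc'.trans hfc.symm)

/-- Existence and uniqueness of the wave speed for the two-signal model of Saragosti et al. -/
theorem stmt_7 (χS χA α DA : ℝ) (hχS : 0 < χS) (hχA : 0 < χA) (hα : 0 < α)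
    (hDA : 0 < DA) :
    (∃! c : ℝ, 0 < c ∧ χS - c = χA * c / Real.sqrt (c ^ 2 + 4 * α * DA)) ∧
    (∀ c : ℝ, 0 < c → χS - c = χA * c / Real.sqrt (c ^ 2 + 4 * α * DA) → c < χS) := by
  have hK : 0 < 4 * α * DA := by positivity
  have hrhs_pos : ∀ c : ℝ, 0 < c → 0 < χA * c / √(c ^ 2 + 4 * α * DA) :=
    fun c hc => div_pos (mul_pos hχA hc) (Real.sqrt_pos.2 (by positivity))
  set f : ℝ → ℝ := fun c => χS - c - χA * (c / √(c ^ 2 + 4 * α * DA))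
  have hf_eq_zero : ∀ c, f c = 0 ↔ χS - c = χA * c / √(c ^ 2 + 4 * α * DA) := fun c => by
    rw [sub_eq_zero, mul_div_assoc]
  have hanti : StrictAntiOn f (Ici 0) := fun a ha b hb hab => by
    have hmono := mul_le_mul_of_nonneg_left (monotoneOn_div_sqrt_sq_add hK ha hb hab.le) hχA.le
    simp only [f]
    linarith
  have hcont : Continuous f := by
    have := continuous_div_sqrt_sq_add hK
    fun_prop
  have hfχS : f χS < 0 := by
    have := hrhs_pos χS hχS
    simp only [f, ← mul_div_assoc]
    linarith
  refine ⟨?_, fun c hc heq => by linarith [hrhs_pos c hc]⟩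
  simpa only [hf_eq_zero] using
    existsUnique_pos_eq_zero_of_strictAntiOn hχS.le hcont.continuousOn hanti (by simpa [f]) hfχS
end

section
/- Let χ_S, χ_A, α, D_A, d, c > 0 and set λ₋ = (χ_S + χ_A − c)/d, λ₊ = (c − χ_S + χ_A)/d, μ₋ = (−c + √(c² + 4 α D_A))/(2 D_A) and μ₊ = (c + √(c² + 4 α D_A))/(2 D_A). Then μ₋ and μ₊ are positive, D_A μ₋² + c μ₋ − α = 0, D_A μ₊² − c μ₊ − α = 0, and the identity λ₋ μ₋ = λ₊ μ₊ holds if and only if (χ_S − c) √(c² + 4 α D_A) = χ_A c. -/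
/-!
Let s = √(c² + 4αD_A). Since s² = c² + 4αD_A, the rates μ₋ and μ₊ are the roots given by the
quadratic formula for D_A μ² + c μ − α and D_A μ² − c μ − α, and they are positive because
s > |c|. After clearing the denominators d and 2D_A, λ₋μ₋ − λ₊μ₊ is a nonzero multiple of
(χ_S − c) s − χ_A c.
-/

theorem abs_lt_sqrt_sq_add {c q : ℝ} (hq : 0 < q) : |c| < √(c ^ 2 + q) :=
  (Real.lt_sqrt (abs_nonneg c)).2 (by rw [sq_abs]; linarith)

theorem neg_add_sqrt_sq_add_pos {c q : ℝ} (hq : 0 < q) : 0 < -c + √(c ^ 2 + q) := by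
  linarith [abs_lt_sqrt_sq_add (c := c) hq, le_abs_self c]

theorem add_sqrt_sq_add_pos {c q : ℝ} (hq : 0 < q) : 0 < c + √(c ^ 2 + q) := by
  linarith [abs_lt_sqrt_sq_add (c := c) hq, neg_le_abs c]

theorem quadratic_root_of_sq_eq {D b α s : ℝ} (hD : D ≠ 0) (hs : s ^ 2 = b ^ 2 + 4 * α * D) :
    D * ((-b + s) / (2 * D)) ^ 2 + b * ((-b + s) / (2 * D)) - α = 0 := by
  field_simp
  linear_combination hs

theorem rate_products_eq_iff_wave_speed_relation {χS χA c s d D : ℝ} (hd : d ≠ 0) (hD : D ≠ 0) :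
    (χS + χA - c) / d * ((-c + s) / (2 * D)) = (c - χS + χA) / d * ((c + s) / (2 * D)) ↔
      (χS - c) * s = χA * c := by
  have hsub : (χS + χA - c) / d * ((-c + s) / (2 * D)) - (c - χS + χA) / d * ((c + s) / (2 * D))
      = ((χS - c) * s - χA * c) / (d * D) := by
    field_simp
    ring
  rw [← sub_eq_zero, hsub, div_eq_zero_iff, sub_eq_zero, or_iff_left (mul_ne_zero hd hD)]

theorem stmt_9_general (χS χA α DA d c lm lp mm mp : ℝ)
    (hα : 0 < α) (hDA : 0 < DA) (hd : 0 < d)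
    (hlm : lm = (χS + χA - c) / d) (hlp : lp = (c - χS + χA) / d)
    (hmm : mm = (-c + Real.sqrt (c ^ 2 + 4 * α * DA)) / (2 * DA))
    (hmp : mp = (c + Real.sqrt (c ^ 2 + 4 * α * DA)) / (2 * DA)) :
    0 < mm ∧ 0 < mp ∧
    DA * mm ^ 2 + c * mm - α = 0 ∧
    DA * mp ^ 2 - c * mp - α = 0 ∧
    (lm * mm = lp * mp ↔ (χS - c) * Real.sqrt (c ^ 2 + 4 * α * DA) = χA * c) := by
  subst hlm hlp hmm hmp
  have hq : 0 < 4 * α * DA := by positivity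
  have hs : √(c ^ 2 + 4 * α * DA) ^ 2 = c ^ 2 + 4 * α * DA := Real.sq_sqrt (by positivity)
  have hμp := quadratic_root_of_sq_eq (b := -c) (s := √(c ^ 2 + 4 * α * DA)) hDA.ne'
    (by rwa [neg_sq])
  simp only [neg_neg, neg_mul, ← sub_eq_add_neg] at hμp
  exact ⟨div_pos (neg_add_sqrt_sq_add_pos hq) (by positivity),
    div_pos (add_sqrt_sq_add_pos hq) (by positivity), quadratic_root_of_sq_eq hDA.ne' hs, hμp,
    rate_products_eq_iff_wave_speed_relation hd.ne' hDA.ne'⟩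

/-- Properties of the exponential rates μ₋, μ₊ and equivalence of λ₋μ₋ = λ₊μ₊ with
the implicit wave-speed relation. -/
theorem stmt_9 (χS χA α DA d c lm lp mm mp : ℝ)
    (hχS : 0 < χS) (hχA : 0 < χA) (hα : 0 < α) (hDA : 0 < DA) (hd : 0 < d) (hc : 0 < c)
    (hlm : lm = (χS + χA - c) / d) (hlp : lp = (c - χS + χA) / d)
    (hmm : mm = (-c + Real.sqrt (c ^ 2 + 4 * α * DA)) / (2 * DA))
    (hmp : mp = (c + Real.sqrt (c ^ 2 + 4 * α * DA)) / (2 * DA)) :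
    0 < mm ∧ 0 < mp ∧
    DA * mm ^ 2 + c * mm - α = 0 ∧
    DA * mp ^ 2 - c * mp - α = 0 ∧
    (lm * mm = lp * mp ↔ (χS - c) * Real.sqrt (c ^ 2 + 4 * α * DA) = χA * c) :=
  stmt_9_general χS χA α DA d c lm lp mm mp hα hDA hd hlm hlp hmm hmp
end

section
/- Let d, χ, r > 0 and set c = 2√(rd) if χ ≤ √(rd), and c = χ + rd/χ if χ ≥ √(rd). Then there exist ρ₋ > 0 and a positive continuous function ρ : ℝ → ℝ, continuously differentiable on (−∞,0] and twice continuously differentiable on [0,∞), integrable on (0,∞), such that: (i) with J = r ∫₀^∞ ρ(z) dz, one has −c ρ(z) − d ρ'(z) + χ ρ(z) = −J for all z < 0; (ii) −c ρ'(z) − d ρ''(z) = r ρ(z) for all z > 0; (iii) the flux is continuous at 0, i.e. −c ρ(0) − d ρ'(0⁻) + χ ρ(0) = −c ρ(0) − d ρ'(0⁺); (iv) ρ(z) → ρ₋ as z → −∞ and ρ(z) → 0 as z → +∞. -/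
open MeasureTheory Filter

private lemma exp_poly_tendsto (A B μ : ℝ) (hμ : 0 < μ) :
    Tendsto (fun z : ℝ => Real.exp (-(μ * z)) * (A + B * z)) atTop (nhds 0) := by
  have hzz : Tendsto (fun z : ℝ => μ * z) atTop atTop :=
    Tendsto.const_mul_atTop hμ tendsto_id
  have h0 : Tendsto (fun z : ℝ => Real.exp (-(μ * z))) atTop (nhds 0) :=
    (Real.tendsto_exp_neg_atTop_nhds_zero.comp hzz).congr fun z => by simp [Function.comp]
  have h1 : Tendsto (fun z : ℝ => z * Real.exp (-μ * z)) atTop (nhds 0) := by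
    have := tendsto_rpow_mul_exp_neg_mul_atTop_nhds_zero 1 μ hμ
    simpa [Real.rpow_one] using this
  have h2 : Tendsto (fun z : ℝ => A * Real.exp (-(μ * z)) + B * (z * Real.exp (-μ * z)))
      atTop (nhds 0) := by
    have := (h0.const_mul A).add (h1.const_mul B)
    simpa using this
  refine h2.congr fun z => by ring

private lemma go_or_grow_aux (d χ r c μ b : ℝ) (hd : 0 < d) (hχ : 0 < χ) (hr : 0 < r)
    (hμ : 0 < μ) (hb : 0 ≤ b)
    (H1 : b * (c * μ - d * μ ^ 2 - r) = 0)
    (H2 : c * μ - d * μ ^ 2 + b * (2 * d * μ - c) = r)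
    (H3 : d * μ - d * b = χ)
    (H4 : r * (μ + b) = (c - χ) * μ ^ 2) :
    ∃ (ρm : ℝ) (ρ : ℝ → ℝ), 0 < ρm ∧
      (∀ z, 0 < ρ z) ∧ Continuous ρ ∧
      ContDiffOn ℝ 1 ρ (Set.Iic 0) ∧ ContDiffOn ℝ 2 ρ (Set.Ici 0) ∧
      IntegrableOn ρ (Set.Ioi 0) ∧
      (∀ z < 0, -c * ρ z - d * deriv ρ z + χ * ρ z
          = -(r * ∫ t in Set.Ioi (0 : ℝ), ρ t)) ∧
      (∀ z > 0, -c * deriv ρ z - d * deriv (deriv ρ) z = r * ρ z) ∧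
      (-c * ρ 0 - d * derivWithin ρ (Set.Iic 0) 0 + χ * ρ 0
          = -c * ρ 0 - d * derivWithin ρ (Set.Ici 0) 0) ∧
      Tendsto ρ atBot (nhds ρm) ∧ Tendsto ρ atTop (nhds 0) := by
  set f : ℝ → ℝ := fun z => Real.exp (-(μ * z)) * (1 + b * z) with hf_def
  set f' : ℝ → ℝ := fun z => Real.exp (-(μ * z)) * (b - μ * (1 + b * z)) with hf'_def
  set f'' : ℝ → ℝ := fun z => Real.exp (-(μ * z)) * (μ ^ 2 * (1 + b * z) - 2 * μ * b)
    with hf''_def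
  have he : ∀ z : ℝ, HasDerivAt (fun z => Real.exp (-(μ * z)))
      (-μ * Real.exp (-(μ * z))) z := by
    intro z
    have h1 : HasDerivAt (fun z : ℝ => -(μ * z)) (-μ) z := by
      have := ((hasDerivAt_id z).const_mul μ).neg; simp only [mul_one] at this; exact this
    simpa [mul_comm] using h1.exp
  have hp : ∀ z : ℝ, HasDerivAt (fun z : ℝ => 1 + b * z) b z := by
    intro z
    simpa using ((hasDerivAt_id z).const_mul b).const_add 1
  have hfd : ∀ z, HasDerivAt f (f' z) z := by
    intro z
    have : HasDerivAt f _ z := (he z).mul (hp z)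
    convert this using 1
    simp [hf'_def, hf_def]
    ring
  have hfd' : ∀ z, HasDerivAt f' (f'' z) z := by
    intro z
    have hq : ∀ z : ℝ, HasDerivAt (fun z : ℝ => b - μ * (1 + b * z)) (-(μ * b)) z := by
      intro z
      simpa using (((hp z).const_mul μ).const_sub b)
    have : HasDerivAt f' _ z := (he z).mul (hq z)
    convert this using 1
    simp [hf''_def, hf'_def]
    ring
  set ρ : ℝ → ℝ := fun z => if z ≤ 0 then (1 : ℝ) else f z with hρ_def
  have hpos : ∀ z, 0 < ρ z := by
    intro z
    by_cases hz : z ≤ 0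
    · simp [hρ_def, hz]
    · push_neg at hz
      have : 0 < 1 + b * z := by nlinarith
      simp only [hρ_def, if_neg (not_le.mpr hz)]
      exact mul_pos (Real.exp_pos _) this
  have hf0 : f 0 = 1 := by simp [hf_def]
  have hEqIci : Set.EqOn ρ f (Set.Ici 0) := by
    intro x hx
    rcases eq_or_lt_of_le (Set.mem_Ici.mp hx) with h | h
    · simp [hρ_def, ← h, hf0]
    · simp [hρ_def, not_le.mpr h]
  have hEqIic : Set.EqOn ρ (fun _ => (1:ℝ)) (Set.Iic 0) := by
    intro x hx
    exact if_pos (hx : x ≤ (0:ℝ))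
  have hfc : ContDiff ℝ 2 f := by
    have : ContDiff ℝ 2 (fun z : ℝ => -(μ * z)) :=
      (contDiff_const.mul contDiff_id).neg
    exact (this.exp).mul (contDiff_const.add (contDiff_const.mul contDiff_id))
  have hcont : Continuous ρ := by
    apply Continuous.if_le continuous_const hfc.continuous continuous_id continuous_const
    intro x hx
    simp only [id_eq] at hx
    rw [hx]
    exact hf0.symm
  -- eventual equality near positive points
  have hev : ∀ z : ℝ, 0 < z → ρ =ᶠ[nhds z] f := by
    intro z hz
    filter_upwards [Ioi_mem_nhds hz] with y hy
    simp [hρ_def, not_le.mpr (Set.mem_Ioi.mp hy)]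
  have hderiv_pos : ∀ z : ℝ, 0 < z → deriv ρ z = f' z := by
    intro z hz
    rw [(hev z hz).deriv_eq, (hfd z).deriv]
  have hderiv2_pos : ∀ z : ℝ, 0 < z → deriv (deriv ρ) z = f'' z := by
    intro z hz
    have : deriv ρ =ᶠ[nhds z] f' := by
      filter_upwards [Ioi_mem_nhds hz] with y hy
      exact hderiv_pos y (Set.mem_Ioi.mp hy)
    rw [this.deriv_eq, (hfd' z).deriv]
  -- the antiderivative on the right
  set F : ℝ → ℝ := fun z => -(Real.exp (-(μ * z)) * ((1 + b * z) / μ + b / μ ^ 2)) with hF_def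
  have hFd : ∀ z, HasDerivAt F (f z) z := by
    intro z
    have hq : HasDerivAt (fun z : ℝ => (1 + b * z) / μ + b / μ ^ 2) (b / μ) z := by
      simpa using (((hp z).div_const μ).add_const (b / μ ^ 2))
    have : HasDerivAt F _ z := ((he z).mul hq).neg
    convert this using 1
    simp only [hf_def]
    field_simp
    ring
  have hμne : μ ≠ 0 := ne_of_gt hμ
  have hFtop : Tendsto F atTop (nhds 0) := by
    have := exp_poly_tendsto (-((1:ℝ) / μ + b / μ ^ 2)) (-(b / μ)) μ hμ
    refine this.congr fun z => ?_
    simp only [hF_def]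
    field_simp
    ring
  have hfnonneg : ∀ x ∈ Set.Ioi (0:ℝ), 0 ≤ f x := by
    intro x hx
    have hx' : (0:ℝ) < x := hx
    have : 0 ≤ 1 + b * x := by nlinarith
    exact mul_nonneg (Real.exp_pos _).le this
  have hint_f : IntegrableOn f (Set.Ioi 0) :=
    integrableOn_Ioi_deriv_of_nonneg' (fun x _ => hFd x) hfnonneg hFtop
  have hint : IntegrableOn ρ (Set.Ioi 0) := by
    refine hint_f.congr_fun ?_ measurableSet_Ioi
    intro x hx
    exact (hEqIci (Set.mem_Ici.mpr (le_of_lt (Set.mem_Ioi.mp hx)))).symm ▸ rfl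
  have hIval : (∫ t in Set.Ioi (0:ℝ), ρ t) = 1 / μ + b / μ ^ 2 := by
    have h1 : (∫ t in Set.Ioi (0:ℝ), ρ t) = ∫ t in Set.Ioi (0:ℝ), f t := by
      apply setIntegral_congr_fun measurableSet_Ioi
      intro x hx
      exact hEqIci (Set.mem_Ici.mpr (le_of_lt (Set.mem_Ioi.mp hx)))
    have h2 : (∫ t in Set.Ioi (0:ℝ), f t) = 0 - F 0 :=
      integral_Ioi_of_hasDerivAt_of_nonneg' (fun x _ => hFd x) hfnonneg hFtop
    rw [h1, h2]
    simp [hF_def]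
  have hJ : r * (∫ t in Set.Ioi (0:ℝ), ρ t) = c - χ := by
    rw [hIval]
    field_simp
    nlinarith [H4, sq_nonneg μ]
  refine ⟨1, ρ, one_pos, hpos, hcont, ?_, ?_, hint, ?_, ?_, ?_, ?_, ?_⟩
  · exact (contDiffOn_const).congr hEqIic
  · exact hfc.contDiffOn.congr hEqIci
  · -- left ODE
    intro z hz
    have hev' : ρ =ᶠ[nhds z] (fun _ => (1:ℝ)) := by
      filter_upwards [Iio_mem_nhds hz] with y hy
      simp [hρ_def, le_of_lt (Set.mem_Iio.mp hy)]
    have h1 : deriv ρ z = 0 := by rw [hev'.deriv_eq]; simp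
    have h2 : ρ z = 1 := by simp [hρ_def, le_of_lt hz]
    rw [h1, h2, hJ]
    ring
  · -- right ODE
    intro z hz
    rw [hderiv_pos z hz, hderiv2_pos z hz]
    have h2 : ρ z = f z := hEqIci (le_of_lt hz)
    rw [h2]
    simp only [hf_def, hf'_def, hf''_def]
    linear_combination (Real.exp (-(μ * z)) * z) * H1 + (Real.exp (-(μ * z))) * H2
  · -- flux continuity
    have hL : derivWithin ρ (Set.Iic 0) 0 = 0 := by
      rw [derivWithin_congr hEqIic (hEqIic Set.self_mem_Iic)]
      exact congrFun (derivWithin_fun_const (Set.Iic (0:ℝ)) (1:ℝ)) 0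
    have hR : derivWithin ρ (Set.Ici 0) 0 = b - μ := by
      rw [derivWithin_congr hEqIci (hEqIci Set.self_mem_Ici)]
      rw [(hfd 0).hasDerivWithinAt.derivWithin (uniqueDiffOn_Ici 0 0 Set.self_mem_Ici)]
      norm_num [hf'_def]
    have h0 : ρ 0 = 1 := by simp [hρ_def]
    rw [hL, hR, h0]
    linarith [H3]
  · -- limit at -∞
    have : ρ =ᶠ[atBot] (fun _ => (1:ℝ)) := by
      filter_upwards [Iic_mem_atBot (0:ℝ)] with y hy
      exact if_pos (hy : y ≤ (0:ℝ))
    exact Tendsto.congr' this.symm tendsto_const_nhds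
  · -- limit at +∞
    have hev' : ρ =ᶠ[atTop] f := by
      filter_upwards [Ioi_mem_atTop (0:ℝ)] with y hy
      simp [hρ_def, not_le.mpr (Set.mem_Ioi.mp hy)]
    have := exp_poly_tendsto 1 b μ hμ
    exact Tendsto.congr' hev'.symm (this.congr fun z => by simp only [hf_def])

/-- Traveling wave of the 'go-or-grow' model with threshold advection, with the
dichotomy for the wave speed. -/
theorem stmt_11 (d χ r : ℝ) (hd : 0 < d) (hχ : 0 < χ) (hr : 0 < r)
    (c : ℝ)
    (hc : c = if χ ≤ Real.sqrt (r * d) then 2 * Real.sqrt (r * d) else χ + r * d / χ) :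
    ∃ (ρm : ℝ) (ρ : ℝ → ℝ), 0 < ρm ∧
      (∀ z, 0 < ρ z) ∧ Continuous ρ ∧
      ContDiffOn ℝ 1 ρ (Set.Iic 0) ∧ ContDiffOn ℝ 2 ρ (Set.Ici 0) ∧
      IntegrableOn ρ (Set.Ioi 0) ∧
      (∀ z < 0, -c * ρ z - d * deriv ρ z + χ * ρ z
          = -(r * ∫ t in Set.Ioi (0 : ℝ), ρ t)) ∧
      (∀ z > 0, -c * deriv ρ z - d * deriv (deriv ρ) z = r * ρ z) ∧
      (-c * ρ 0 - d * derivWithin ρ (Set.Iic 0) 0 + χ * ρ 0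
          = -c * ρ 0 - d * derivWithin ρ (Set.Ici 0) 0) ∧
      Tendsto ρ atBot (nhds ρm) ∧ Tendsto ρ atTop (nhds 0) := by
  set s := Real.sqrt (r * d) with hs_def
  have hs0 : 0 < s := Real.sqrt_pos.mpr (mul_pos hr hd)
  have hs2 : s ^ 2 = r * d := Real.sq_sqrt (mul_pos hr hd).le
  by_cases h : χ ≤ s
  · -- pulled case
    rw [if_pos h] at hc
    subst hc
    refine go_or_grow_aux d χ r _ (s / d) (s / d - χ / d) hd hχ hr
      (div_pos hs0 hd) (by
        have : χ / d ≤ s / d := div_le_div_of_nonneg_right h hd.le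
        linarith) ?_ ?_ ?_ ?_
    · field_simp
      linear_combination (s - χ) * hs2
    · field_simp
      linear_combination hs2
    · field_simp
      ring
    · field_simp
      linear_combination (χ - 2 * s) * hs2
  · -- chemotaxis case
    rw [if_neg h] at hc
    push_neg at h
    refine go_or_grow_aux d χ r c (χ / d) 0 hd hχ hr (div_pos hχ hd) le_rfl ?_ ?_ ?_ ?_ <;>
      subst hc <;> field_simp <;> ring
end

section
/- Let d, χ, c, J > 0 and let ρ : (−∞, 0] → ℝ be a differentiable nonnegative function satisfying d ρ'(z) = J + (χ − c) ρ(z) for all z ≤ 0. Then c > χ. -/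
open MeasureTheory Filter

/-- Nonnegativity of the density behind the front forces the wave speed to exceed
the advection speed. -/
theorem stmt_12 (d χ c J : ℝ) (hd : 0 < d) (hχ : 0 < χ) (hc : 0 < c) (hJ : 0 < J)
    (ρ : ℝ → ℝ) (hdiff : DifferentiableOn ℝ ρ (Set.Iic 0))
    (hnonneg : ∀ z ≤ 0, 0 ≤ ρ z)
    (hode : ∀ z ≤ 0, d * derivWithin ρ (Set.Iic 0) z = J + (χ - c) * ρ z) :
    χ < c := by
  by_contra h
  push_neg at h
  have hcc : 0 ≤ χ - c := sub_nonneg.2 h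
  set K := J / d with hKdef
  have hK : 0 < K := div_pos hJ hd
  have hg : MonotoneOn (fun z => ρ z - K * z) (Set.Iic 0) := by
    apply monotoneOn_of_deriv_nonneg (convex_Iic 0)
    · exact (hdiff.sub ((differentiable_id.const_mul K).differentiableOn)).continuousOn
    · rw [interior_Iic]
      exact (hdiff.sub ((differentiable_id.const_mul K).differentiableOn)).mono
        (by rw [← interior_Iic]; exact interior_subset)
    · rw [interior_Iic]
      intro x hx
      have hxle : x ≤ 0 := le_of_lt hx
      have hmem : Set.Iic (0:ℝ) ∈ nhds x := Iic_mem_nhds hx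
      have hρdiff : DifferentiableAt ℝ ρ x :=
        (hdiff x hxle).differentiableAt hmem
      have hdw : derivWithin ρ (Set.Iic 0) x = deriv ρ x :=
        derivWithin_of_mem_nhds hmem
      have hderiv : deriv (fun z => ρ z - K * z) x = deriv ρ x - K := by
        have : DifferentiableAt ℝ (fun z : ℝ => K * z) x :=
          (differentiableAt_id.const_mul K)
        rw [deriv_fun_sub hρdiff this, deriv_const_mul_field, deriv_id'']
        ring
      rw [hderiv]
      have hode' := hode x hxle
      rw [hdw] at hode'
      have hρ' : deriv ρ x = (J + (χ - c) * ρ x) / d := by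
        field_simp at hode' ⊢
        linarith
      rw [hρ']
      have h1 : J ≤ J + (χ - c) * ρ x := by
        nlinarith [hnonneg x hxle]
      have : K ≤ (J + (χ - c) * ρ x) / d := by
        rw [hKdef]
        exact div_le_div_of_nonneg_right h1 hd.le
      linarith
  -- pick a very negative z
  set z := -(ρ 0 + 1) / K with hz
  have hρ0 : 0 ≤ ρ 0 := hnonneg 0 le_rfl
  have hzneg : z < 0 := by
    apply div_neg_of_neg_of_pos _ hK
    linarith
  have hle := hg (Set.mem_Iic.2 hzneg.le) (Set.mem_Iic.2 le_rfl) hzneg.le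
  simp only at hle
  have hKz : K * z = -(ρ 0 + 1) := by
    rw [hz]; field_simp
  have : ρ z ≤ -1 := by
    have := hle
    simp only [mul_zero, sub_zero] at this
    linarith [hKz ▸ this]
  linarith [hnonneg z hzneg.le]
end

section
/- Let d, χ, r, k, S_init, S₀ > 0 with S₀ < S_init, and set c = 2√(r · max{d, χ log(S_init/S₀)}). Then there exist ρ₋ > 0 and functions ρ, S : ℝ → ℝ such that: ρ is positive, continuous on ℝ, continuously differentiable on (−∞,0] and twice continuously differentiable on [0,∞), and integrable on (0,∞); S is positive, strictly increasing and differentiable with S(0) = S₀, S(z) → 0 as z → −∞ and S(z) → S_init as z → +∞; c S'(z) = k ρ(z) S(z) for all z ∈ ℝ; with J = r ∫₀^∞ ρ(z) dz, one has −c ρ(z) − d ρ'(z) + χ ρ(z) S'(z)/S(z) = −J for all z < 0, and −c ρ'(z) − d ρ''(z) = r ρ(z) for all z > 0; the flux is continuous at 0, i.e. −c ρ(0) − d ρ'(0⁻) + χ ρ(0) S'(0)/S(0) = −c ρ(0) − d ρ'(0⁺); and ρ(z) → ρ₋ as z → −∞, ρ(z) → 0 as z → +∞. -/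
open MeasureTheory Filter

lemma tendsto_exp_mul_atTop (μ : ℝ) (hμ : μ < 0) :
    Tendsto (fun z : ℝ => Real.exp (μ * z)) atTop (nhds 0) := by
  have h : Tendsto (fun z : ℝ => μ * z) atTop atBot :=
    Tendsto.const_mul_atTop_of_neg hμ tendsto_id
  exact Real.tendsto_exp_atBot.comp h

lemma tendsto_id_mul_exp_mul_atTop (μ : ℝ) (hμ : μ < 0) :
    Tendsto (fun z : ℝ => z * Real.exp (μ * z)) atTop (nhds 0) := by
  have h1 : Tendsto (fun z : ℝ => (-μ) * z) atTop atTop :=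
    Tendsto.const_mul_atTop (by linarith) tendsto_id
  have h2 := (Real.tendsto_pow_mul_exp_neg_atTop_nhds_zero 1).comp h1
  have h3 := h2.const_mul (-1/μ)
  rw [mul_zero] at h3
  refine h3.congr fun z => ?_
  simp only [Function.comp_apply, pow_one]
  have : -(-μ * z) = μ * z := by ring
  rw [this]
  have hne : μ ≠ 0 := hμ.ne
  field_simp


lemma tw_key (d χ r k S_init S0 c L ρm : ℝ) (f f1 G : ℝ → ℝ)
    (hd : 0 < d) (hχ : 0 < χ) (hr : 0 < r) (hk : 0 < k) (hS0 : 0 < S0)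
    (hcpos : 0 < c) (hρm : 0 < ρm)
    (hSinit : S_init = S0 * Real.exp L)
    (hfC2 : ContDiff ℝ 2 f)
    (hf1 : ∀ z, HasDerivAt f (f1 z) z)
    (hfpos : ∀ z ∈ Set.Ici (0:ℝ), 0 < f z)
    (hf0 : f 0 = ρm)
    (hODE : ∀ z, -c * f1 z - d * deriv f1 z = r * f z)
    (hG : ∀ z, HasDerivAt G (f z) z) (hG0 : G 0 = 0)
    (hGtop : Tendsto G atTop (nhds (c * L / k)))
    (hftop : Tendsto f atTop (nhds 0))
    (hroot : χ * k / c * ρm ^ 2 - c * ρm + r * (c * L / k) = 0)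
    (hflux : χ * k / c * ρm ^ 2 = -d * f1 0) :
    ∃ (ρm' : ℝ) (ρ S : ℝ → ℝ), 0 < ρm' ∧
      (∀ z, 0 < ρ z) ∧ Continuous ρ ∧
      ContDiffOn ℝ 1 ρ (Set.Iic 0) ∧ ContDiffOn ℝ 2 ρ (Set.Ici 0) ∧
      IntegrableOn ρ (Set.Ioi 0) ∧
      (∀ z, 0 < S z) ∧ StrictMono S ∧ Differentiable ℝ S ∧ S 0 = S0 ∧
      Tendsto S atBot (nhds 0) ∧ Tendsto S atTop (nhds S_init) ∧
      (∀ z, c * deriv S z = k * ρ z * S z) ∧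
      (∀ z < 0, -c * ρ z - d * deriv ρ z + χ * ρ z * (deriv S z / S z)
          = -(r * ∫ t in Set.Ioi (0 : ℝ), ρ t)) ∧
      (∀ z > 0, -c * deriv ρ z - d * deriv (deriv ρ) z = r * ρ z) ∧
      (-c * ρ 0 - d * derivWithin ρ (Set.Iic 0) 0 + χ * ρ 0 * (deriv S 0 / S 0)
          = -c * ρ 0 - d * derivWithin ρ (Set.Ici 0) 0) ∧
      Tendsto ρ atBot (nhds ρm') ∧ Tendsto ρ atTop (nhds 0) := by
  have hcne : c ≠ 0 := hcpos.ne'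
  have hkne : k ≠ 0 := hk.ne'
  set ρ : ℝ → ℝ := fun z => if z ≤ 0 then ρm else f z with hρdef
  set F : ℝ → ℝ := fun z => if z ≤ 0 then ρm * z else G z with hFdef
  set S : ℝ → ℝ := fun z => S0 * Real.exp ((k/c) * F z) with hSdef
  -- basic agreement lemmas
  have hρIic : ∀ x ∈ Set.Iic (0:ℝ), ρ x = ρm := fun x hx => if_pos hx
  have hρIci : Set.EqOn ρ f (Set.Ici 0) := by
    intro x hx
    rcases eq_or_lt_of_le (Set.mem_Ici.1 hx) with h | h
    · simp [hρdef, ← h, hf0]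
    · simp [hρdef, not_le.2 h]
  have hρIoi : ∀ x ∈ Set.Ioi (0:ℝ), ρ x = f x := fun x hx => hρIci (Set.mem_Ici.2 (le_of_lt (Set.mem_Ioi.1 hx)))
  have hρ0 : ρ 0 = ρm := if_pos le_rfl
  have hρpos : ∀ z, 0 < ρ z := by
    intro z
    by_cases h : z ≤ 0
    · rw [hρIic z h]; exact hρm
    · rw [hρIoi z (not_le.1 h)]; exact hfpos z (le_of_lt (not_le.1 h))
  -- F has derivative ρ everywhere
  have hF : ∀ z, HasDerivAt F (ρ z) z := by
    intro z
    rcases lt_trichotomy z 0 with hz | hz | hz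
    · have hev : F =ᶠ[nhds z] fun x => ρm * x := by
        filter_upwards [Iio_mem_nhds hz] with x hx
        exact if_pos (le_of_lt hx)
      have : HasDerivAt (fun x => ρm * x) ρm z := by
        simpa using (hasDerivAt_id z).const_mul ρm
      rw [hρdef]; simp only [if_pos hz.le]
      exact this.congr_of_eventuallyEq hev
    · subst hz
      have h1 : HasDerivWithinAt F ρm (Set.Iic 0) 0 := by
        have : HasDerivWithinAt (fun x => ρm * x) ρm (Set.Iic 0) 0 := by
          simpa using ((hasDerivAt_id (0:ℝ)).const_mul ρm).hasDerivWithinAt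
        refine this.congr (fun x hx => if_pos hx) (by simp [hFdef])
      have h2 : HasDerivWithinAt F ρm (Set.Ici 0) 0 := by
        have h0 : HasDerivWithinAt G (f 0) (Set.Ici 0) 0 := (hG 0).hasDerivWithinAt
        rw [hf0] at h0
        refine h0.congr (fun x hx => ?_) (by simp [hFdef, hG0])
        rcases eq_or_lt_of_le (Set.mem_Ici.1 hx) with h | h
        · simp [hFdef, ← h, hG0]
        · simp [hFdef, not_le.2 h]
      have := h1.union h2
      rw [Set.Iic_union_Ici, hasDerivWithinAt_univ] at this
      rwa [hρ0]
    · have hev : F =ᶠ[nhds z] G := by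
        filter_upwards [Ioi_mem_nhds hz] with x hx
        exact if_neg (not_le.2 hx)
      rw [hρdef]; simp only [if_neg (not_le.2 hz)]
      exact (hG z).congr_of_eventuallyEq hev
  -- S has derivative
  have hS : ∀ z, HasDerivAt S (k/c * ρ z * S z) z := by
    intro z
    have h1 : HasDerivAt (fun x => (k/c) * F x) (k/c * ρ z) z := (hF z).const_mul _
    have h2 := (h1.exp).const_mul S0
    convert h2 using 1
    · rfl
    · rfl
    rw [hSdef]; ring
  have hSpos : ∀ z, 0 < S z := fun z => by positivity
  have hderivS : ∀ z, deriv S z = k/c * ρ z * S z := fun z => (hS z).deriv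
  have hSoverS : ∀ z, deriv S z / S z = k/c * ρ z := by
    intro z
    rw [hderivS z, mul_div_assoc, div_self (hSpos z).ne', mul_one]
  -- continuity of ρ
  have hρcont : Continuous ρ := by
    rw [hρdef]
    apply Continuous.if_le continuous_const hfC2.continuous continuous_id continuous_const
    intro x hx
    simp only [id] at hx
    rw [hx, hf0]
  -- integral
  have hInt : (∫ t in Set.Ioi (0:ℝ), ρ t) = c * L / k := by
    rw [setIntegral_congr_fun measurableSet_Ioi hρIoi]
    have := integral_Ioi_of_hasDerivAt_of_nonneg' (g := G) (g' := f) (a := 0)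
      (fun x _ => hG x) (fun x hx => (hfpos x (le_of_lt (Set.mem_Ioi.1 hx))).le) hGtop
    rw [this, hG0, sub_zero]
  have hIntegrable : IntegrableOn ρ (Set.Ioi 0) := by
    have h := integrableOn_Ioi_deriv_of_nonneg' (g := G) (g' := f) (a := 0)
      (fun x _ => hG x) (fun x hx => (hfpos x (le_of_lt (Set.mem_Ioi.1 hx))).le) hGtop
    exact h.congr_fun (fun x hx => (hρIoi x hx).symm) measurableSet_Ioi
  -- deriv ρ on the two sides
  have hderivρ_neg : ∀ z < 0, deriv ρ z = 0 := by
    intro z hz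
    have hev : ρ =ᶠ[nhds z] fun _ => ρm := by
      filter_upwards [Iio_mem_nhds hz] with x hx
      exact if_pos (le_of_lt hx)
    rw [hev.deriv_eq, deriv_const]
  have hevpos : ∀ z > 0, ρ =ᶠ[nhds z] f := by
    intro z hz
    filter_upwards [Ioi_mem_nhds hz] with x hx
    exact hρIoi x hx
  have hderivρ_pos : ∀ z > 0, deriv ρ z = f1 z := by
    intro z hz
    rw [(hevpos z hz).deriv_eq, (hf1 z).deriv]
  refine ⟨ρm, ρ, S, hρm, hρpos, hρcont, ?_, ?_, hIntegrable, hSpos, ?_, ?_, ?_, ?_, ?_, ?_, ?_, ?_, ?_, ?_, ?_⟩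
  · -- ContDiffOn 1 on Iic
    exact (contDiffOn_const (c := ρm)).congr hρIic
  · -- ContDiffOn 2 on Ici
    exact (hfC2.contDiffOn).congr hρIci
  · -- StrictMono S
    apply strictMono_of_deriv_pos
    intro z
    rw [hderivS z]
    have := hρpos z; have := hSpos z; positivity
  · exact fun z => (hS z).differentiableAt
  · simp [hSdef, hFdef]
  · -- S atBot
    have h1 : Tendsto (fun z : ℝ => (k/c) * (ρm * z)) atBot atBot := by
      apply Tendsto.const_mul_atBot (by positivity)
      exact Tendsto.const_mul_atBot hρm tendsto_id
    have h2 : Tendsto (fun z : ℝ => S0 * Real.exp ((k/c) * (ρm * z))) atBot (nhds 0) := by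
      have := (Real.tendsto_exp_atBot.comp h1).const_mul S0
      simpa using this
    refine h2.congr' ?_
    filter_upwards [Iic_mem_atBot (0:ℝ)] with x hx
    simp only [Set.mem_Iic] at hx
    rw [hSdef]; simp only [hFdef, if_pos hx]
  · -- S atTop
    have h1 : Tendsto (fun z => (k/c) * G z) atTop (nhds ((k/c) * (c * L / k))) :=
      hGtop.const_mul _
    have h2 := (Real.continuous_exp.tendsto _).comp h1
    have h3 := h2.const_mul S0
    have heq : (k/c) * (c * L / k) = L := by field_simp
    rw [heq] at h3
    rw [hSinit]
    refine h3.congr' ?_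
    filter_upwards [Ioi_mem_atTop (0:ℝ)] with x hx
    rw [hSdef]; simp only [hFdef, if_neg (not_le.2 (Set.mem_Ioi.1 hx)), Function.comp_apply]
  · -- c S' = k ρ S
    intro z
    rw [hderivS z]
    field_simp
  · -- ODE z < 0
    intro z hz
    rw [hInt, hderivρ_neg z hz, hSoverS z, hρIic z hz.le]
    linear_combination hroot
  · -- ODE z > 0
    intro z hz
    have hev := hevpos z hz
    have hev1 : deriv ρ =ᶠ[nhds z] f1 := by
      filter_upwards [Ioi_mem_nhds hz] with x hx
      exact hderivρ_pos x hx
    rw [hderivρ_pos z hz, hev1.deriv_eq, hρIoi z hz]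
    exact hODE z
  · -- flux condition
    have h1 : derivWithin ρ (Set.Iic 0) 0 = 0 := by
      have : HasDerivWithinAt ρ 0 (Set.Iic 0) 0 := by
        refine (hasDerivWithinAt_const 0 _ ρm).congr hρIic hρ0
      exact this.derivWithin (uniqueDiffOn_Iic 0 0 Set.self_mem_Iic)
    have h2 : derivWithin ρ (Set.Ici 0) 0 = f1 0 := by
      have : HasDerivWithinAt ρ (f1 0) (Set.Ici 0) 0 := by
        refine ((hf1 0).hasDerivWithinAt).congr hρIci (by rw [hρ0, hf0])
      exact this.derivWithin (uniqueDiffOn_Ici 0 0 Set.self_mem_Ici)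
    rw [h1, h2, hSoverS 0, hρ0]
    linear_combination hflux
  · -- tendsto atBot
    refine tendsto_const_nhds.congr' ?_
    filter_upwards [Iic_mem_atBot (0:ℝ)] with x hx
    exact (hρIic x hx).symm
  · -- tendsto atTop
    refine hftop.congr' ?_
    filter_upwards [Ioi_mem_atTop (0:ℝ)] with x hx
    exact (hρIoi x hx).symm

set_option maxHeartbeats 1000000 in
/-- Traveling wave of the 'go-or-grow' model with logarithmic sensitivity,
zero chemical diffusion and consumption rate kρS, with the explicit wave speed
c = 2√(r max{d, χ log(S_init/S₀)}). -/
theorem stmt_16 (d χ r k S_init S0 : ℝ) (hd : 0 < d) (hχ : 0 < χ) (hr : 0 < r)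
    (hk : 0 < k) (hS_init : 0 < S_init) (hS0 : 0 < S0) (hlt : S0 < S_init)
    (c : ℝ)
    (hc : c = 2 * Real.sqrt (r * max d (χ * Real.log (S_init / S0)))) :
    ∃ (ρm : ℝ) (ρ S : ℝ → ℝ), 0 < ρm ∧
      (∀ z, 0 < ρ z) ∧ Continuous ρ ∧
      ContDiffOn ℝ 1 ρ (Set.Iic 0) ∧ ContDiffOn ℝ 2 ρ (Set.Ici 0) ∧
      IntegrableOn ρ (Set.Ioi 0) ∧
      (∀ z, 0 < S z) ∧ StrictMono S ∧ Differentiable ℝ S ∧ S 0 = S0 ∧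
      Tendsto S atBot (nhds 0) ∧ Tendsto S atTop (nhds S_init) ∧
      (∀ z, c * deriv S z = k * ρ z * S z) ∧
      (∀ z < 0, -c * ρ z - d * deriv ρ z + χ * ρ z * (deriv S z / S z)
          = -(r * ∫ t in Set.Ioi (0 : ℝ), ρ t)) ∧
      (∀ z > 0, -c * deriv ρ z - d * deriv (deriv ρ) z = r * ρ z) ∧
      (-c * ρ 0 - d * derivWithin ρ (Set.Iic 0) 0 + χ * ρ 0 * (deriv S 0 / S 0)
          = -c * ρ 0 - d * derivWithin ρ (Set.Ici 0) 0) ∧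
      Tendsto ρ atBot (nhds ρm) ∧ Tendsto ρ atTop (nhds 0) := by
  have hdne : d ≠ 0 := hd.ne'
  have hχne : χ ≠ 0 := hχ.ne'
  have hkne : k ≠ 0 := hk.ne'
  set L := Real.log (S_init / S0) with hLdef
  have hL : 0 < L := Real.log_pos ((one_lt_div hS0).2 hlt)
  have hSinit' : S_init = S0 * Real.exp L := by
    rw [hLdef, Real.exp_log (by positivity)]
    field_simp
  have hD : 0 < max d (χ * L) := lt_of_lt_of_le hd (le_max_left _ _)
  have hcpos : 0 < c := by
    rw [hc]
    have : 0 < Real.sqrt (r * max d (χ * L)) := Real.sqrt_pos.2 (by positivity)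
    linarith
  have hcne : c ≠ 0 := hcpos.ne'
  have hc2 : c ^ 2 = 4 * (r * max d (χ * L)) := by
    rw [hc, mul_pow, Real.sq_sqrt (by positivity)]
    ring
  rcases le_total (χ * L) d with hcase | hcase
  · -- case χL ≤ d : c² = 4rd
    have hc2d : c ^ 2 = 4 * (r * d) := by rw [hc2, max_eq_left hcase]
    obtain ⟨s, hsdef⟩ : ∃ x, x = Real.sqrt (c ^ 2 - 4 * (r * (χ * L))) := ⟨_, rfl⟩
    have hs2 : s ^ 2 = c ^ 2 - 4 * (r * (χ * L)) := by
      rw [hsdef, Real.sq_sqrt (by nlinarith)]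
    have hs0 : 0 ≤ s := hsdef ▸ Real.sqrt_nonneg _
    have hsc : s < c := by nlinarith [mul_pos hr (mul_pos hχ hL)]
    obtain ⟨ρm, hρmdef⟩ : ∃ x, x = c * (c - s) / (2 * χ * k) := ⟨_, rfl⟩
    have hρm : 0 < ρm := by
      rw [hρmdef]; apply div_pos (by nlinarith) (by positivity)
    obtain ⟨lam, hlamdef⟩ : ∃ x, x = -(c / (2 * d)) := ⟨_, rfl⟩
    have hlamneg : lam < 0 := by
      rw [hlamdef]; simp only [neg_neg, neg_lt, neg_zero]; positivity
    have hlamne : lam ≠ 0 := hlamneg.ne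
    have hclam : c + 2 * d * lam = 0 := by rw [hlamdef]; field_simp; ring
    have hrlam : d * lam ^ 2 - r = 0 := by
      rw [hlamdef]; field_simp; nlinarith [hc2d]
    obtain ⟨b, hbdef⟩ : ∃ x, x = lam ^ 2 * c * L / k + lam * ρm := ⟨_, rfl⟩
    have hkey : c * (d - χ * L) ≤ d * s := by
      have h1 : 0 ≤ r * d * (χ * L) * (d - χ * L) :=
        mul_nonneg (mul_nonneg (mul_nonneg hr.le hd.le) (mul_pos hχ hL).le)
          (sub_nonneg.2 hcase)
      have hdiff : (d * s) ^ 2 - (c * (d - χ * L)) ^ 2 = 4 * (r * d * (χ * L) * (d - χ * L)) := by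
        linear_combination d ^ 2 * hs2 + (d ^ 2 - (d - χ * L) ^ 2) * hc2d
      have hsq : (c * (d - χ * L)) ^ 2 ≤ (d * s) ^ 2 := by linarith
      nlinarith [mul_nonneg hd.le hs0, hsq]
    have hbeq : b = c ^ 2 * (d * s - c * (d - χ * L)) / (4 * d ^ 2 * χ * k) := by
      rw [hbdef, hlamdef, hρmdef]; field_simp; ring
    have hb : 0 ≤ b := by
      rw [hbeq]
      apply div_nonneg (by nlinarith [sq_nonneg c]) (by positivity)
    obtain ⟨f, hfdef⟩ : ∃ g : ℝ → ℝ, g = fun z => (ρm + b * z) * Real.exp (lam * z) := ⟨_, rfl⟩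
    obtain ⟨f1, hf1def⟩ : ∃ g : ℝ → ℝ,
      g = fun z => (b + lam * (ρm + b * z)) * Real.exp (lam * z) := ⟨_, rfl⟩
    obtain ⟨f2, hf2def⟩ : ∃ g : ℝ → ℝ,
      g = fun z => (2 * lam * b + lam ^ 2 * (ρm + b * z)) * Real.exp (lam * z) := ⟨_, rfl⟩
    obtain ⟨G, hGdef⟩ : ∃ g : ℝ → ℝ,
      g = fun z => c * L / k + ((ρm + b * z) / lam - b / lam ^ 2) * Real.exp (lam * z) := ⟨_, rfl⟩
    have hexp : ∀ z : ℝ, HasDerivAt (fun z => Real.exp (lam * z)) (lam * Real.exp (lam * z)) z := by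
      intro z
      simpa [mul_comm] using ((hasDerivAt_id z).const_mul lam).exp
    have hlin : ∀ z : ℝ, HasDerivAt (fun z : ℝ => ρm + b * z) b z := by
      intro z
      simpa using ((hasDerivAt_id z).const_mul b).const_add ρm
    have hf1' : ∀ z, HasDerivAt f (f1 z) z := by
      intro z
      have h := (hlin z).mul (hexp z)
      convert h using 1
      · rfl
      · rfl
      · rw [hfdef]; rfl
      rw [hf1def]; ring
    have hf2' : ∀ z, HasDerivAt f1 (f2 z) z := by
      intro z
      have hlin2 : HasDerivAt (fun z : ℝ => b + lam * (ρm + b * z)) (lam * b) z := by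
        simpa using (((hasDerivAt_id z).const_mul b).const_add ρm).const_mul lam |>.const_add b
      have h := hlin2.mul (hexp z)
      convert h using 1
      · rfl
      · rfl
      · rw [hf1def]; rfl
      rw [hf2def]; ring
    have hfC2 : ContDiff ℝ 2 f := by
      rw [hfdef]
      exact (contDiff_const.add (contDiff_const.mul contDiff_id)).mul
        (Real.contDiff_exp.comp (contDiff_const.mul contDiff_id))
    have hfpos : ∀ z ∈ Set.Ici (0:ℝ), 0 < f z := by
      intro z hz
      have hz0 : (0:ℝ) ≤ z := hz
      have : 0 < ρm + b * z := by nlinarith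
      rw [hfdef]
      exact mul_pos this (Real.exp_pos _)
    have hf0 : f 0 = ρm := by rw [hfdef]; simp
    have hODE : ∀ z, -c * f1 z - d * deriv f1 z = r * f z := by
      intro z
      rw [(hf2' z).deriv, hf1def, hf2def, hfdef]
      simp only
      linear_combination (-(Real.exp (lam * z)) * (b + lam * (ρm + b * z))) * hclam +
        Real.exp (lam * z) * (ρm + b * z) * hrlam
    have hG' : ∀ z, HasDerivAt G (f z) z := by
      intro z
      have hlin3 : HasDerivAt (fun z : ℝ => (ρm + b * z) / lam - b / lam ^ 2) (b / lam) z :=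
        ((hlin z).div_const lam).sub_const _
      have h := (hlin3.mul (hexp z)).const_add (c * L / k)
      convert h using 1
      · rfl
      · rfl
      · rw [hGdef]; rfl
      rw [hfdef]
      field_simp
      ring
    have hG0 : G 0 = 0 := by
      rw [hGdef]
      simp only [mul_zero, add_zero, Real.exp_zero, mul_one]
      rw [hbdef]
      field_simp
      ring
    have hGtop : Tendsto G atTop (nhds (c * L / k)) := by
      have h := (((tendsto_exp_mul_atTop lam hlamneg).const_mul (ρm / lam - b / lam ^ 2)).add
        ((tendsto_id_mul_exp_mul_atTop lam hlamneg).const_mul (b / lam))).const_add (c * L / k)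
      simp only [mul_zero, add_zero] at h
      refine h.congr fun z => ?_
      rw [hGdef]
      simp only
      ring
    have hftop : Tendsto f atTop (nhds 0) := by
      have h := ((tendsto_exp_mul_atTop lam hlamneg).const_mul ρm).add
        ((tendsto_id_mul_exp_mul_atTop lam hlamneg).const_mul b)
      simp only [mul_zero, add_zero] at h
      refine h.congr fun z => ?_
      rw [hfdef]
      simp only
      ring
    have hroot : χ * k / c * ρm ^ 2 - c * ρm + r * (c * L / k) = 0 := by
      rw [hρmdef]
      field_simp
      linear_combination c * hs2
    have hflux : χ * k / c * ρm ^ 2 = -d * f1 0 := by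
      have hf10 : f1 0 = b + lam * ρm := by rw [hf1def]; simp
      rw [hf10, hbdef]
      linear_combination hroot + (c * L / k) * hrlam + ρm * hclam
    exact tw_key d χ r k S_init S0 c L ρm f f1 G hd hχ hr hk hS0 hcpos hρm hSinit'
      hfC2 hf1' hfpos hf0 hODE hG' hG0 hGtop hftop hroot hflux
  · -- case d ≤ χL : c² = 4rχL
    have hc2x : c ^ 2 = 4 * (r * (χ * L)) := by rw [hc2, max_eq_right hcase]
    obtain ⟨e, hedef⟩ : ∃ x, x = Real.sqrt (c ^ 2 - 4 * (r * d)) := ⟨_, rfl⟩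
    have he2 : e ^ 2 = c ^ 2 - 4 * (r * d) := by
      rw [hedef, Real.sq_sqrt (by nlinarith [mul_pos hr hd, mul_pos hr (mul_pos hχ hL)])]
    have he0 : 0 ≤ e := hedef ▸ Real.sqrt_nonneg _
    have hec : e < c := by nlinarith [mul_pos hr hd]
    obtain ⟨lp, hlpdef⟩ : ∃ x, x = (-c + e) / (2 * d) := ⟨_, rfl⟩
    obtain ⟨lm, hlmdef⟩ : ∃ x, x = (-c - e) / (2 * d) := ⟨_, rfl⟩
    have hlpneg : lp < 0 := by
      rw [hlpdef]; apply div_neg_of_neg_of_pos (by linarith) (by positivity)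
    have hlmneg : lm < 0 := by
      rw [hlmdef]; apply div_neg_of_neg_of_pos (by linarith) (by positivity)
    have hlpne : lp ≠ 0 := hlpneg.ne
    have hlmne : lm ≠ 0 := hlmneg.ne
    have hP : d * lp ^ 2 + c * lp + r = 0 := by
      rw [hlpdef]; field_simp; linear_combination he2
    have hQ : d * lm ^ 2 + c * lm + r = 0 := by
      rw [hlmdef]; field_simp; linear_combination he2
    have hsum : lp + lm = -(c / d) := by rw [hlpdef, hlmdef]; field_simp; ring
    obtain ⟨a, hadef⟩ : ∃ x, x = r * L / k := ⟨_, rfl⟩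
    have hapos : 0 < a := by rw [hadef]; positivity
    obtain ⟨ρm, hρmdef⟩ : ∃ x, x = 2 * a := ⟨_, rfl⟩
    have hρm : 0 < ρm := by rw [hρmdef]; linarith
    obtain ⟨f, hfdef⟩ : ∃ g : ℝ → ℝ,
      g = fun z => a * (Real.exp (lp * z) + Real.exp (lm * z)) := ⟨_, rfl⟩
    obtain ⟨f1, hf1def⟩ : ∃ g : ℝ → ℝ,
      g = fun z => a * (lp * Real.exp (lp * z) + lm * Real.exp (lm * z)) := ⟨_, rfl⟩
    obtain ⟨f2, hf2def⟩ : ∃ g : ℝ → ℝ,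
      g = fun z => a * (lp ^ 2 * Real.exp (lp * z) + lm ^ 2 * Real.exp (lm * z)) := ⟨_, rfl⟩
    obtain ⟨G, hGdef⟩ : ∃ g : ℝ → ℝ,
      g = fun z => a * ((Real.exp (lp * z) - 1) / lp + (Real.exp (lm * z) - 1) / lm) := ⟨_, rfl⟩
    have hexpP : ∀ z : ℝ, HasDerivAt (fun z => Real.exp (lp * z)) (lp * Real.exp (lp * z)) z := by
      intro z
      simpa [mul_comm] using ((hasDerivAt_id z).const_mul lp).exp
    have hexpQ : ∀ z : ℝ, HasDerivAt (fun z => Real.exp (lm * z)) (lm * Real.exp (lm * z)) z := by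
      intro z
      simpa [mul_comm] using ((hasDerivAt_id z).const_mul lm).exp
    have hf1' : ∀ z, HasDerivAt f (f1 z) z := by
      intro z
      have h := ((hexpP z).add (hexpQ z)).const_mul a
      rw [hfdef, hf1def]
      convert h using 1
      · rfl
      · rfl
      · rfl
    have hf2' : ∀ z, HasDerivAt f1 (f2 z) z := by
      intro z
      have h := (((hexpP z).const_mul lp).add ((hexpQ z).const_mul lm)).const_mul a
      rw [hf1def, hf2def]
      convert h using 1
      · rfl
      · rfl
      · rfl
      simp only
      ring
    have hfC2 : ContDiff ℝ 2 f := by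
      rw [hfdef]
      exact contDiff_const.mul ((Real.contDiff_exp.comp (contDiff_const.mul contDiff_id)).add
        (Real.contDiff_exp.comp (contDiff_const.mul contDiff_id)))
    have hfpos : ∀ z ∈ Set.Ici (0:ℝ), 0 < f z := by
      intro z _
      rw [hfdef]
      have := Real.exp_pos (lp * z)
      have := Real.exp_pos (lm * z)
      simp only
      positivity
    have hf0 : f 0 = ρm := by
      rw [hfdef, hρmdef]; simp only [mul_zero, Real.exp_zero]; ring
    have hODE : ∀ z, -c * f1 z - d * deriv f1 z = r * f z := by
      intro z
      rw [(hf2' z).deriv, hf1def, hf2def, hfdef]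
      simp only
      linear_combination (-(a * Real.exp (lp * z))) * hP + (-(a * Real.exp (lm * z))) * hQ
    have hG' : ∀ z, HasDerivAt G (f z) z := by
      intro z
      have h := ((((hexpP z).sub_const 1).div_const lp).add
        (((hexpQ z).sub_const 1).div_const lm)).const_mul a
      rw [hGdef, hfdef]
      convert h using 1
      · rfl
      · rfl
      · rfl
      simp only
      field_simp
    have hG0 : G 0 = 0 := by
      rw [hGdef]
      simp only [mul_zero, Real.exp_zero, sub_self, zero_div, add_zero]
    have hGtop : Tendsto G atTop (nhds (c * L / k)) := by
      have hval : a * (-(1 / lp) - 1 / lm) = c * L / k := by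
        rw [hadef, hlpdef, hlmdef]
        have hne1 : -c + e ≠ 0 := by intro h; nlinarith
        have hne2 : -c - e ≠ 0 := by intro h; nlinarith
        field_simp
        linear_combination c * he2
      have h := ((((tendsto_exp_mul_atTop lp hlpneg).const_mul (1 / lp)).add
        ((tendsto_exp_mul_atTop lm hlmneg).const_mul (1 / lm))).const_add
        (-(1 / lp) - 1 / lm)).const_mul a
      simp only [mul_zero, add_zero] at h
      rw [hval] at h
      refine h.congr fun z => ?_
      rw [hGdef]
      simp only
      field_simp
      ring
    have hftop : Tendsto f atTop (nhds 0) := by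
      have h := (((tendsto_exp_mul_atTop lp hlpneg).add
        (tendsto_exp_mul_atTop lm hlmneg)).const_mul a)
      simp only [add_zero, mul_zero] at h
      refine h.congr fun z => ?_
      rw [hfdef]
    have hroot : χ * k / c * ρm ^ 2 - c * ρm + r * (c * L / k) = 0 := by
      rw [hρmdef, hadef]
      field_simp
      linear_combination (-(r * L)) * hc2x
    have hflux : χ * k / c * ρm ^ 2 = -d * f1 0 := by
      have hf10 : f1 0 = a * (lp + lm) := by
        rw [hf1def]; simp
      rw [hf10, hsum, hρmdef, hadef]
      field_simp
      linear_combination (-1 : ℝ) * hc2x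
    exact tw_key d χ r k S_init S0 c L ρm f f1 G hd hχ hr hk hS0 hcpos hρm hSinit'
      hfC2 hf1' hfpos hf0 hODE hG' hG0 hGtop hftop hroot hflux
end

section
/- Let c, d, k, χ, J > 0 with 4 k χ J > c³. Then there is no differentiable nonnegative function ρ : (−∞, 0] → ℝ satisfying d ρ'(z) = −c ρ(z) + (k χ / c) ρ(z)² + J for all z ≤ 0. -/
/-!
The right-hand side of the ODE is a quadratic in `ρ` with positive leading coefficient `kχ/c`
and negative discriminant `c² - 4kχJ/c`, so it is bounded below by a positive constant. Hence `ρ' ≥ m > 0` on the whole back half-line, and by the mean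
value theorem `ρ(z) ≤ ρ(0) - m|z|` eventually becomes negative as `z → -∞`.
-/

open Set

theorem neg_discrim_div_le_quadratic {K : Type*} [Field K] [LinearOrder K] [IsStrictOrderedRing K]
    {a : K} (b c : K) (ha : 0 < a) (x : K) :
    -discrim a b c / (4 * a) ≤ a * (x * x) + b * x + c := by
  rw [div_le_iff₀ (by positivity), discrim]
  nlinarith [sq_nonneg (2 * a * x + b)]

theorem not_bddBelow_image_Iic_of_le_derivWithin {f : ℝ → ℝ} {a m : ℝ}
    (hf : DifferentiableOn ℝ f (Iic a)) (hm : 0 < m)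
    (hf' : ∀ z < a, m ≤ derivWithin f (Iic a) z) : ¬ BddBelow (f '' Iic a) := by
  rintro ⟨B, hB⟩
  have hlin : ∀ z ≤ a, m * (a - z) ≤ f a - f z := fun z hz =>
    (convex_Iic a).mul_sub_le_image_sub_of_le_deriv hf.continuousOn (hf.mono interior_subset)
      (fun x hx => by
        rw [interior_Iic] at hx
        rw [← derivWithin_of_mem_nhds (Iic_mem_nhds hx)]
        exact hf' x hx)
      z hz a self_mem_Iic hz
  have hBa : B ≤ f a := hB (mem_image_of_mem f self_mem_Iic)
  set z := a - (f a - B + 1) / m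
  have hz : z ≤ a := sub_le_self _ (by positivity)
  have hmz : m * (a - z) = f a - B + 1 := by
    simp only [z, sub_sub_cancel]
    field_simp
  have hBz : B ≤ f z := hB (mem_image_of_mem f hz)
  linarith [hlin z hz]

theorem stmt_17_general (c d k χ J : ℝ) (hc : 0 < c) (hd : 0 < d) (hk : 0 < k) (hχ : 0 < χ)
    (hdisc : c ^ 3 < 4 * k * χ * J) :
    ¬ ∃ ρ : ℝ → ℝ, DifferentiableOn ℝ ρ (Set.Iic 0) ∧ (∀ z ≤ 0, 0 ≤ ρ z) ∧
      ∀ z ≤ 0, d * derivWithin ρ (Set.Iic 0) z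
        = -c * ρ z + (k * χ / c) * ρ z ^ 2 + J := by
  rintro ⟨ρ, hdiff, hpos, hode⟩
  set a := k * χ / c
  have ha : 0 < a := by positivity
  have hneg : discrim a (-c) J < 0 := by
    have hac : a * c = k * χ := div_mul_cancel₀ _ hc.ne'
    have hcubic : discrim a (-c) J * c = c ^ 3 - 4 * k * χ * J := by
      rw [discrim]; linear_combination (-4 * J) * hac
    refine lt_of_mul_lt_mul_right ?_ hc.le
    rw [hcubic, zero_mul]
    linarith
  have hm : 0 < -discrim a (-c) J / (4 * a) / d := by
    have := neg_pos.2 hneg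
    positivity
  refine not_bddBelow_image_Iic_of_le_derivWithin hdiff hm (fun z hz => ?_)
    ⟨0, by rintro _ ⟨z, hz, rfl⟩; exact hpos z hz⟩
  rw [div_le_iff₀ hd]
  calc -discrim a (-c) J / (4 * a) ≤ a * (ρ z * ρ z) + -c * ρ z + J :=
        neg_discrim_div_le_quadratic _ _ ha _
    _ = derivWithin ρ (Iic 0) z * d := by rw [mul_comm _ d, hode z hz.le]; ring

/-- Negative discriminant (c³ < 4kχJ) rules out nonnegative solutions of the
back-of-the-wave ODE in the logarithmic-sensitivity 'go-or-grow' model. -/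
theorem stmt_17 (c d k χ J : ℝ) (hc : 0 < c) (hd : 0 < d) (hk : 0 < k) (hχ : 0 < χ)
    (hJ : 0 < J) (hdisc : c ^ 3 < 4 * k * χ * J) :
    ¬ ∃ ρ : ℝ → ℝ, DifferentiableOn ℝ ρ (Set.Iic 0) ∧ (∀ z ≤ 0, 0 ≤ ρ z) ∧
      ∀ z ≤ 0, d * derivWithin ρ (Set.Iic 0) z
        = -c * ρ z + (k * χ / c) * ρ z ^ 2 + J :=
  stmt_17_general c d k χ J hc hd hk hχ hdisc
end

section
/- Let c, d > 0 and 0 < χ₁ < χ₂, let G : ℝ → ℝ be differentiable, and let ρ₁, ρ₂ : ℝ → ℝ be positive twice differentiable functions satisfying, for i = 1, 2 and all z ∈ ℝ, −c − d (log ρ_i)'(z) + χ_i G'(z) = 0. Suppose ρ_i attains a global maximum at z_i* for i = 1, 2. Then: (a) c = χ_i G'(z_i*) for i = 1, 2; (b) if G is twice differentiable then G''(z_i*) ≤ 0 for i = 1, 2; (c) if moreover G' is strictly decreasing on an interval containing both z₁* and z₂*, then z₁* < z₂*. -/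
open MeasureTheory Filter

open Set Topology in
private lemma sdtest_19 (f : ℝ → ℝ) (a : ℝ) (hf : Differentiable ℝ f)
    (hf' : DifferentiableAt ℝ (deriv f) a) (hmax : ∀ x, f x ≤ f a) :
    deriv (deriv f) a ≤ 0 := by
  by_contra h
  push_neg at h
  have hda : deriv f a = 0 :=
    (IsLocalMax.deriv_eq_zero (Filter.Eventually.of_forall hmax))
  have hslope : Tendsto (slope (deriv f) a) (𝓝[≠] a) (𝓝 (deriv (deriv f) a)) :=
    hasDerivAt_iff_tendsto_slope.1 hf'.hasDerivAt
  have hev : ∀ᶠ x in 𝓝[>] a, 0 < slope (deriv f) a x := by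
    have := hslope.eventually (eventually_gt_nhds h)
    exact nhdsWithin_mono a (fun x hx => ne_of_gt hx) this
  have hev2 : ∀ᶠ x in 𝓝[>] a, 0 < deriv f x := by
    filter_upwards [hev, self_mem_nhdsWithin] with x hx (hxa : a < x)
    have : slope (deriv f) a x = deriv f x / (x - a) := by
      simp [slope_def_field, hda]
    rw [this] at hx
    have := mul_pos hx (sub_pos.2 hxa)
    rwa [div_mul_cancel₀] at this
    exact ne_of_gt (sub_pos.2 hxa)
  obtain ⟨b, hb, hIoo⟩ := (mem_nhdsGT_iff_exists_Ioo_subset).1 hev2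
  have hab : a < b := hb
  have : StrictMonoOn f (Icc a b) := by
    apply strictMonoOn_of_deriv_pos (convex_Icc a b) hf.continuous.continuousOn
    intro x hx
    rw [interior_Icc] at hx
    exact hIoo hx
  have := this (left_mem_Icc.2 hab.le) (right_mem_Icc.2 hab.le) hab
  exact absurd (hmax b) (not_le.2 this)

/-- Spatial-sorting argument of Fu et al.: two phenotypes with zero flux in a common
moving frame have their density peaks on the concave part of the perceived signal,
ordered by increasing chemotactic sensitivity. -/
theorem stmt_19 (c d χ1 χ2 : ℝ) (hc : 0 < c) (hd : 0 < d) (hχ1 : 0 < χ1)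
    (hχ12 : χ1 < χ2) (G : ℝ → ℝ) (hG : Differentiable ℝ G)
    (ρ1 ρ2 : ℝ → ℝ)
    (hρ1pos : ∀ z, 0 < ρ1 z) (hρ2pos : ∀ z, 0 < ρ2 z)
    (hρ1d : Differentiable ℝ ρ1) (hρ1d2 : Differentiable ℝ (deriv ρ1))
    (hρ2d : Differentiable ℝ ρ2) (hρ2d2 : Differentiable ℝ (deriv ρ2))
    (heq1 : ∀ z, -c - d * deriv (fun w => Real.log (ρ1 w)) z + χ1 * deriv G z = 0)
    (heq2 : ∀ z, -c - d * deriv (fun w => Real.log (ρ2 w)) z + χ2 * deriv G z = 0)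
    (z1 z2 : ℝ) (hmax1 : ∀ z, ρ1 z ≤ ρ1 z1) (hmax2 : ∀ z, ρ2 z ≤ ρ2 z2) :
    (c = χ1 * deriv G z1 ∧ c = χ2 * deriv G z2) ∧
    (Differentiable ℝ (deriv G) →
      deriv (deriv G) z1 ≤ 0 ∧ deriv (deriv G) z2 ≤ 0) ∧
    (∀ I : Set ℝ, I.OrdConnected → z1 ∈ I → z2 ∈ I →
      StrictAntiOn (deriv G) I → z1 < z2) := by
  have hχ2 : 0 < χ2 := hχ1.trans hχ12
  -- log derivatives
  have hlog1 : ∀ z, deriv (fun w => Real.log (ρ1 w)) z = deriv ρ1 z / ρ1 z := fun z =>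
    ((hρ1d z).hasDerivAt.log (hρ1pos z).ne').deriv
  have hlog2 : ∀ z, deriv (fun w => Real.log (ρ2 w)) z = deriv ρ2 z / ρ2 z := fun z =>
    ((hρ2d z).hasDerivAt.log (hρ2pos z).ne').deriv
  -- peaks: deriv vanishes
  have hd1 : deriv ρ1 z1 = 0 := IsLocalMax.deriv_eq_zero (Filter.Eventually.of_forall hmax1)
  have hd2 : deriv ρ2 z2 = 0 := IsLocalMax.deriv_eq_zero (Filter.Eventually.of_forall hmax2)
  have ha1 : c = χ1 * deriv G z1 := by
    have := heq1 z1; rw [hlog1 z1, hd1] at this; simp at this; linarith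
  have ha2 : c = χ2 * deriv G z2 := by
    have := heq2 z2; rw [hlog2 z2, hd2] at this; simp at this; linarith
  refine ⟨⟨ha1, ha2⟩, ?_, ?_⟩
  · intro hG2
    have key : ∀ (χ : ℝ) (ρ : ℝ → ℝ) (zs : ℝ), 0 < χ → (∀ z, 0 < ρ z) →
        Differentiable ℝ ρ → Differentiable ℝ (deriv ρ) →
        (∀ z, -c - d * deriv (fun w => Real.log (ρ w)) z + χ * deriv G z = 0) →
        (∀ z, ρ z ≤ ρ zs) → deriv (deriv G) zs ≤ 0 := by
      intro χ ρ zs hχ hρpos hρd hρd2 heq hmax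
      set L : ℝ → ℝ := fun w => Real.log (ρ w) with hL
      have hlog : ∀ z, deriv L z = deriv ρ z / ρ z := fun z =>
        ((hρd z).hasDerivAt.log (hρpos z).ne').deriv
      have hLd : Differentiable ℝ L := fun z => ((hρd z).log (hρpos z).ne')
      have hLd2 : Differentiable ℝ (deriv L) := by
        have : deriv L = fun z => deriv ρ z / ρ z := funext hlog
        rw [this]
        exact hρd2.div hρd fun z => (hρpos z).ne'
      have hLmax : ∀ z, L z ≤ L zs := fun z =>
        Real.log_le_log (hρpos z) (hmax z)
      have hL2 : deriv (deriv L) zs ≤ 0 := sdtest_19 L zs hLd (hLd2 zs) hLmax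
      -- relate deriv L and deriv G
      have hrel : deriv L = fun z => (χ * deriv G z - c) / d := by
        funext z
        have := heq z
        field_simp
        linarith
    -- deriv (deriv L) zs = χ/d * deriv (deriv G) zs
      have hdd : deriv (deriv L) zs = χ / d * deriv (deriv G) zs := by
        rw [hrel]
        have h1 : HasDerivAt (fun z => (χ * deriv G z - c) / d)
            (χ * deriv (deriv G) zs / d) zs := by
          exact (((hG2 zs).hasDerivAt.const_mul χ).sub_const c).div_const d
        rw [h1.deriv]; ring
      rw [hdd] at hL2
      have := mul_nonpos_iff.1 hL2
      rcases this with ⟨h1, h2⟩ | ⟨h1, h2⟩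
      · exact h2
      · nlinarith [div_pos hχ hd]
    exact ⟨key χ1 ρ1 z1 hχ1 hρ1pos hρ1d hρ1d2 heq1 hmax1,
           key χ2 ρ2 z2 hχ2 hρ2pos hρ2d hρ2d2 heq2 hmax2⟩
  · intro I hI hz1 hz2 hanti
    have hgt : deriv G z2 < deriv G z1 := by
      have e1 : deriv G z1 = c / χ1 := by field_simp [ha1]; linarith
      have e2 : deriv G z2 = c / χ2 := by field_simp [ha2]; linarith
      rw [e1, e2]
      exact div_lt_div_of_pos_left hc hχ1 hχ12
    by_contra h
    push_neg at h
    rcases eq_or_lt_of_le h with heq | hlt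
    · rw [heq] at hgt; exact lt_irrefl _ hgt
    · exact absurd (hanti hz2 hz1 hlt) (not_lt.2 hgt.le)
end
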